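/- arXiv:0911.1739 — 9 statements merged into one kernel-verified Lean document; each statement's English description precedes it below -/
import Mathlib

section
/- Let n ≥ 1 and let X be a real n×n matrix all of whose row sums and column sums are zero, and all of whose entries are ≥ −1/n. Then the Frobenius norm of X satisfies ‖X‖_F ≤ √(n−1). -/
open Matrix MeasureTheory ENNReal

/-- Frobenius norm of a real square matrix: ‖X‖_F = √(tr(X Xᵀ)). -/
noncomputable def frob {n : ℕ} (X : Matrix (Fin n) (Fin n) ℝ) : ℝ :=
  Real.sqrt ((X * Xᵀ).trace)

/-- A permutation matrix: a 0-1 matrix with exactly one 1 in each row and each column. -/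
def IsPermMatrix {n : ℕ} (P : Matrix (Fin n) (Fin n) ℝ) : Prop :=
  (∀ i j, P i j = 0 ∨ P i j = 1) ∧ (∀ i, ∃! j, P i j = 1) ∧ (∀ j, ∃! i, P i j = 1)

/-- The matrix J_n all of whose entries are 1/n. -/
noncomputable def Jmat (n : ℕ) : Matrix (Fin n) (Fin n) ℝ := Matrix.of fun _ _ => (1 / n : ℝ)

/-- P₀(S,T) = {X ∈ M_n : SX - XT = 0}, where M_n is the set of matrices with all
row and column sums zero. -/
def P0 {n : ℕ} (S T : Matrix (Fin n) (Fin n) ℝ) : Set (Matrix (Fin n) (Fin n) ℝ) :=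
  {X | X *ᵥ 1 = 0 ∧ Xᵀ *ᵥ 1 = 0 ∧ S * X - X * T = 0}

/-- P(S,T) = {X ∈ P₀(S,T) : every entry of X is ≥ -1/n}. -/
def Pset {n : ℕ} (S T : Matrix (Fin n) (Fin n) ℝ) : Set (Matrix (Fin n) (Fin n) ℝ) :=
  {X | X ∈ P0 S T ∧ ∀ i j, -(1 / n : ℝ) ≤ X i j}

/-- P₀(S,T) as a linear subspace of the space of real n×n matrices. -/
def P0sub {n : ℕ} (S T : Matrix (Fin n) (Fin n) ℝ) :
    Submodule ℝ (Matrix (Fin n) (Fin n) ℝ) where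
  carrier := P0 S T
  add_mem' := by
    rintro X Y ⟨h1, h2, h3⟩ ⟨g1, g2, g3⟩
    refine ⟨?_, ?_, ?_⟩
    · rw [Matrix.add_mulVec, h1, g1, add_zero]
    · rw [Matrix.transpose_add, Matrix.add_mulVec, h2, g2, add_zero]
    · have h : S * (X + Y) - (X + Y) * T = (S * X - X * T) + (S * Y - Y * T) := by
        rw [Matrix.mul_add, Matrix.add_mul]; abel
      rw [h, h3, g3, add_zero]
  zero_mem' := by
    refine ⟨?_, ?_, ?_⟩ <;> simp [P0]
  smul_mem' := by
    rintro c X ⟨h1, h2, h3⟩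
    refine ⟨?_, ?_, ?_⟩
    · rw [Matrix.smul_mulVec, h1, smul_zero]
    · rw [Matrix.transpose_smul, Matrix.smul_mulVec, h2, smul_zero]
    · have h : S * (c • X) - (c • X) * T = c • (S * X - X * T) := by
        rw [Matrix.mul_smul, Matrix.smul_mul, smul_sub]
      rw [h, h3, smul_zero]

/-- The linear isometric identification of n×n matrices, endowed with the
Frobenius-norm metric, with the Euclidean space ℝ^(n²); Hausdorff measures of
sets of matrices with respect to the Frobenius metric are computed via this map. -/
noncomputable def matEuclid (n : ℕ) (X : Matrix (Fin n) (Fin n) ℝ) :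
    EuclideanSpace ℝ (Fin n × Fin n) :=
  (EuclideanSpace.equiv (Fin n × Fin n) ℝ).symm (fun p => X p.1 p.2)
/-- If n ≥ 1 and X is a real n×n matrix all of whose row and column sums are zero
and all of whose entries are ≥ -1/n, then ‖X‖_F ≤ √(n-1). -/
theorem frob_le_sqrt_of_doublyStochasticShift (n : ℕ) (hn : 1 ≤ n)
    (X : Matrix (Fin n) (Fin n) ℝ)
    (hrow : X *ᵥ 1 = 0) (hcol : Xᵀ *ᵥ 1 = 0)
    (hent : ∀ i j, -(1 / n : ℝ) ≤ X i j) :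
    frob X ≤ Real.sqrt ((n : ℝ) - 1) := by
  have hn0 : (0:ℝ) < n := by exact_mod_cast hn
  have hrow' : ∀ i, ∑ j, X i j = 0 := by
    intro i
    have := congrFun hrow i
    simpa [Matrix.mulVec, dotProduct] using this
  have hcol' : ∀ j, ∑ i, X i j = 0 := by
    intro j
    have := congrFun hcol j
    simpa [Matrix.mulVec, dotProduct, Matrix.transpose] using this
  set Y : Matrix (Fin n) (Fin n) ℝ := fun i j => X i j + 1/n with hY
  have hY0 : ∀ i j, 0 ≤ Y i j := by
    intro i j; have := hent i j; show 0 ≤ X i j + 1/n; linarith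
  have hYrow : ∀ i, ∑ j, Y i j = 1 := by
    intro i
    simp only [hY]
    rw [Finset.sum_add_distrib, hrow' i, zero_add, Finset.sum_const,
      Finset.card_univ, Fintype.card_fin, nsmul_eq_mul]
    field_simp
  have hY1 : ∀ i j, Y i j ≤ 1 := by
    intro i j
    calc Y i j ≤ ∑ k, Y i k :=
          Finset.single_le_sum (fun k _ => hY0 i k) (Finset.mem_univ j)
      _ = 1 := hYrow i
  have hYsq : ∑ i, ∑ j, (Y i j)^2 ≤ (n:ℝ) := by
    calc ∑ i, ∑ j, (Y i j)^2 ≤ ∑ i, ∑ j, Y i j := by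
          refine Finset.sum_le_sum fun i _ => Finset.sum_le_sum fun j _ => ?_
          nlinarith [hY0 i j, hY1 i j]
      _ = (n:ℝ) := by simp [hYrow]
  have hXsq : ∑ i, ∑ j, (X i j)^2 = (∑ i, ∑ j, (Y i j)^2) - 1 := by
    have hexp : ∀ i j : Fin n, (X i j)^2 = (Y i j)^2 - (2/n) * Y i j + 1/n^2 := by
      intro i j
      simp only [hY]
      have : (n:ℝ) ≠ 0 := ne_of_gt hn0
      field_simp
      ring
    simp_rw [hexp, Finset.sum_add_distrib, Finset.sum_sub_distrib,
      ← Finset.mul_sum, hYrow]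
    rw [Finset.sum_const, Finset.sum_const, Finset.sum_const, Finset.card_univ,
      Fintype.card_fin, nsmul_eq_mul, nsmul_eq_mul, nsmul_eq_mul]
    have : (n:ℝ) ≠ 0 := ne_of_gt hn0
    field_simp
    ring
  have htr : (X * Xᵀ).trace = ∑ i, ∑ j, (X i j)^2 := by
    simp [Matrix.trace, Matrix.mul_apply, Matrix.diag, sq]
  have hbound : (X * Xᵀ).trace ≤ (n:ℝ) - 1 := by
    rw [htr, hXsq]; linarith
  unfold frob
  exact Real.sqrt_le_sqrt hbound
end

section
/- Let n ≥ 1 and let X be a real n×n matrix all of whose row sums and column sums are zero, and all of whose entries are ≥ −1/n. Then ‖X‖_F = √(n−1) if and only if X = P − J_n for some n×n permutation matrix P. -/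
open Matrix MeasureTheory ENNReal

lemma aux_exists_unique_eq_one {n : ℕ} (f : Fin n → ℝ) (h01 : ∀ j, f j = 0 ∨ f j = 1)
    (hsum : ∑ j, f j = 1) : ∃! j, f j = 1 := by
  have hnn : ∀ j, 0 ≤ f j := fun j => by rcases h01 j with h | h <;> simp [h]
  have hex : ∃ j, f j = 1 := by
    by_contra h
    push_neg at h
    have hz : ∀ j, f j = 0 := fun j => (h01 j).resolve_right (h j)
    simp [hz] at hsum
  obtain ⟨j, hj⟩ := hex
  refine ⟨j, hj, fun k hk => ?_⟩
  by_contra hne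
  have hsub : ∑ x ∈ ({k, j} : Finset (Fin n)), f x ≤ ∑ x, f x :=
    Finset.sum_le_sum_of_subset_of_nonneg (Finset.subset_univ _) (fun x _ _ => hnn x)
  rw [Finset.sum_pair hne, hj, hk, hsum] at hsub
  linarith

/-- Under the hypotheses of Statement 0, equality ‖X‖_F = √(n-1) holds if and only
if X = P - J_n for some permutation matrix P. -/
theorem frob_eq_sqrt_iff_permMatrix_sub_J (n : ℕ) (hn : 1 ≤ n)
    (X : Matrix (Fin n) (Fin n) ℝ)
    (hrow : X *ᵥ 1 = 0) (hcol : Xᵀ *ᵥ 1 = 0)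
    (hent : ∀ i j, -(1 / n : ℝ) ≤ X i j) :
    frob X = Real.sqrt ((n : ℝ) - 1) ↔
      ∃ P : Matrix (Fin n) (Fin n) ℝ, IsPermMatrix P ∧ X = P - Jmat n := by
  
  have hn0 : (n : ℝ) ≠ 0 := by
    have : (0:ℝ) < n := by exact_mod_cast hn
    linarith
  have hrs : ∀ i, ∑ j, X i j = 0 := by
    intro i
    have := congrFun hrow i
    simpa [Matrix.mulVec, dotProduct] using this
  have hcs : ∀ j, ∑ i, X i j = 0 := by
    intro j
    have := congrFun hcol j
    simpa [Matrix.mulVec, dotProduct] using this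
  have hS : (X * Xᵀ).trace = ∑ i, ∑ j, X i j ^ 2 := by
    simp [Matrix.trace, Matrix.mul_apply, Matrix.diag, sq]
  have hSnn : (0:ℝ) ≤ ∑ i, ∑ j, X i j ^ 2 := by positivity
  have hn1 : (0:ℝ) ≤ (n:ℝ) - 1 := by
    have : (1:ℝ) ≤ n := by exact_mod_cast hn
    linarith
  have hiff : frob X = Real.sqrt ((n:ℝ) - 1) ↔ (∑ i, ∑ j, X i j ^ 2) = (n:ℝ) - 1 := by
    rw [frob, hS, Real.sqrt_inj hSnn hn1]
  have key : ∑ i, ∑ j, (X i j + 1/(n:ℝ))^2 = (∑ i, ∑ j, X i j ^ 2) + 1 := by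
    have expand : ∀ i : Fin n, ∑ j, (X i j + 1/(n:ℝ))^2
        = (∑ j, X i j ^ 2) + (2/(n:ℝ)) * (∑ j, X i j) + (n:ℝ) * (1/(n:ℝ))^2 := by
      intro i
      have hterm : ∀ j, (X i j + 1/(n:ℝ))^2 = X i j^2 + (2/(n:ℝ)) * X i j + (1/(n:ℝ))^2 :=
        fun j => by ring
      simp_rw [hterm, Finset.sum_add_distrib, Finset.sum_const, Finset.card_univ,
        Fintype.card_fin, nsmul_eq_mul, Finset.mul_sum]
    calc ∑ i, ∑ j, (X i j + 1/(n:ℝ))^2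
        = ∑ i : Fin n, ((∑ j, X i j ^ 2) + (2/(n:ℝ)) * (∑ j, X i j) + (n:ℝ) * (1/(n:ℝ))^2) := by
          exact Finset.sum_congr rfl fun i _ => expand i
      _ = (∑ i, ∑ j, X i j ^ 2) + (∑ i : Fin n, ((2/(n:ℝ)) * (∑ j, X i j)))
            + (n:ℝ) * ((n:ℝ) * (1/(n:ℝ))^2) := by
          rw [Finset.sum_add_distrib, Finset.sum_add_distrib, Finset.sum_const,
            Finset.card_univ, Fintype.card_fin, nsmul_eq_mul]
      _ = (∑ i, ∑ j, X i j ^ 2) + 1 := by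
          have h2 : ∀ i : Fin n, (2/(n:ℝ)) * (∑ j, X i j) = 0 := fun i => by rw [hrs i]; ring
          simp_rw [h2, Finset.sum_const, smul_zero, add_zero]
          field_simp
  -- entries of Y = X + 1/n
  have hY0 : ∀ i j, 0 ≤ X i j + 1/(n:ℝ) := fun i j => by linarith [hent i j]
  have hYrow : ∀ i, ∑ j, (X i j + 1/(n:ℝ)) = 1 := by
    intro i
    rw [Finset.sum_add_distrib, hrs i, Finset.sum_const, Finset.card_univ, Fintype.card_fin,
      nsmul_eq_mul]
    field_simp
    norm_num
  have hYcol : ∀ j, ∑ i, (X i j + 1/(n:ℝ)) = 1 := by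
    intro j
    rw [Finset.sum_add_distrib, hcs j, Finset.sum_const, Finset.card_univ, Fintype.card_fin,
      nsmul_eq_mul]
    field_simp
    norm_num
  have hY1 : ∀ i j, X i j + 1/(n:ℝ) ≤ 1 := by
    intro i j
    have := Finset.single_le_sum (f := fun k => X i k + 1/(n:ℝ))
      (fun k _ => hY0 i k) (Finset.mem_univ j)
    rw [hYrow i] at this
    exact this
  rw [hiff]
  constructor
  · intro hval
    have hYsq : ∑ i, ∑ j, (X i j + 1/(n:ℝ))^2 = (n:ℝ) := by rw [key, hval]; ring
    have hYsum : ∑ i, ∑ j, (X i j + 1/(n:ℝ)) = (n:ℝ) := by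
      rw [Finset.sum_congr rfl fun i _ => hYrow i]
      simp
    have hdiff : ∑ i, ∑ j, ((X i j + 1/(n:ℝ)) - (X i j + 1/(n:ℝ))^2) = 0 := by
      simp_rw [Finset.sum_sub_distrib]
      rw [hYsum, hYsq, sub_self]
    have hnn : ∀ i ∈ Finset.univ, (0:ℝ) ≤ ∑ j, ((X i j + 1/(n:ℝ)) - (X i j + 1/(n:ℝ))^2) := by
      intro i _
      refine Finset.sum_nonneg fun j _ => ?_
      nlinarith [hY0 i j, hY1 i j]
    have hrow0 := (Finset.sum_eq_zero_iff_of_nonneg hnn).mp hdiff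
    have h01 : ∀ i j, X i j + 1/(n:ℝ) = 0 ∨ X i j + 1/(n:ℝ) = 1 := by
      intro i j
      have hj0 := (Finset.sum_eq_zero_iff_of_nonneg
        (fun j _ => by nlinarith [hY0 i j, hY1 i j])).mp (hrow0 i (Finset.mem_univ i))
        j (Finset.mem_univ j)
      have : (X i j + 1/(n:ℝ)) * (1 - (X i j + 1/(n:ℝ))) = 0 := by nlinarith [hj0]
      rcases mul_eq_zero.mp this with h | h
      · exact Or.inl h
      · exact Or.inr (by linarith)
    refine ⟨Matrix.of fun i j => X i j + 1/(n:ℝ), ⟨fun i j => h01 i j, ?_, ?_⟩, ?_⟩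
    · exact fun i => aux_exists_unique_eq_one _ (h01 i) (hYrow i)
    · exact fun j => aux_exists_unique_eq_one _ (fun i => h01 i j) (hYcol j)
    · funext i j
      simp [Jmat, Matrix.sub_apply]
  · rintro ⟨P, ⟨hP01, hProw, hPcol⟩, hXP⟩
    have hPij : ∀ i j, X i j + 1/(n:ℝ) = P i j := by
      intro i j
      rw [hXP]
      simp [Jmat, Matrix.sub_apply]
    have hProwsum : ∀ i, ∑ j, P i j = 1 := by
      intro i
      obtain ⟨j0, hj0, huniq⟩ := hProw i
      rw [Finset.sum_eq_single j0]
      · exact hj0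
      · intro b _ hb
        rcases hP01 i b with h | h
        · exact h
        · exact absurd (huniq b h) hb
      · intro h
        exact absurd (Finset.mem_univ j0) h
    have hPsq : ∑ i, ∑ j, (X i j + 1/(n:ℝ))^2 = (n:ℝ) := by
      simp_rw [hPij]
      have : ∀ i j, (P i j)^2 = P i j := by
        intro i j
        rcases hP01 i j with h | h <;> rw [h] <;> ring
      simp_rw [this, hProwsum, Finset.sum_const, Finset.card_univ, Fintype.card_fin,
        nsmul_eq_mul, mul_one]
    rw [key] at hPsq
    linarith
end

section
/- Let n ≥ 1, N ∈ ℝ, and let A be a real n×n matrix with A𝟏 = N𝟏 and Aᵀ𝟏 = N𝟏 (all row and column sums equal to N). Then I_n − J_n ∈ P(A,A); consequently the maximum of the Frobenius norm over the compact convex polytope P(A,A) equals √(n−1). -/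
open Matrix MeasureTheory ENNReal

private lemma row_sq_sum {n : ℕ} (hn : 0 < n) (f : Fin n → ℝ)
    (hsum : ∑ j, f j = 0) (hge : ∀ j, -(1 / n : ℝ) ≤ f j) :
    ∑ j, (f j) ^ 2 ≤ 1 - 1 / n := by
  have hn' : (0 : ℝ) < n := Nat.cast_pos.mpr hn
  set g : Fin n → ℝ := fun j => f j + 1 / n with hgdef
  have hg0 : ∀ j, 0 ≤ g j := fun j => by have := hge j; simp only [hgdef]; linarith
  have hgsum : ∑ j, g j = 1 := by
    simp only [hgdef, Finset.sum_add_distrib, hsum, Finset.sum_const,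
      Finset.card_univ, Fintype.card_fin, nsmul_eq_mul, zero_add]
    field_simp
  have hg1 : ∀ j, g j ≤ 1 := by
    intro j
    calc g j ≤ ∑ j, g j := Finset.single_le_sum (fun i _ => hg0 i) (Finset.mem_univ j)
    _ = 1 := hgsum
  have hsq : ∀ j, (g j) ^ 2 ≤ g j := fun j => by nlinarith [hg0 j, hg1 j]
  have hrw : ∑ j, (f j) ^ 2 = ∑ j, ((g j) ^ 2 - (2 / n) * g j + 1 / n ^ 2) := by
    apply Finset.sum_congr rfl
    intro j _
    have : f j = g j - 1 / n := by simp [hgdef]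
    rw [this]; field_simp; ring
  rw [hrw]
  have h1 : ∑ j, ((g j) ^ 2 - (2 / n) * g j + 1 / n ^ 2)
      = (∑ j, (g j) ^ 2) - (2 / n) * (∑ j, g j) + n * (1 / n ^ 2) := by
    rw [Finset.sum_add_distrib, Finset.sum_sub_distrib, ← Finset.mul_sum]
    simp [Finset.card_univ]
  rw [h1, hgsum]
  have h2 : (∑ j, (g j) ^ 2) ≤ ∑ j, g j := Finset.sum_le_sum (fun j _ => hsq j)
  rw [hgsum] at h2
  have : (n : ℝ) * (1 / n ^ 2) = 1 / n := by field_simp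
  rw [this]
  have h3 : (2 : ℝ) / n * 1 = 2 * (1 / n) := by ring
  linarith

private lemma trace_sq_eq {n : ℕ} (X : Matrix (Fin n) (Fin n) ℝ) :
    (X * Xᵀ).trace = ∑ i, ∑ j, (X i j) ^ 2 := by
  simp [Matrix.trace, Matrix.diag, Matrix.mul_apply, sq]

private lemma frob_le {n : ℕ} (hn : 0 < n) (X : Matrix (Fin n) (Fin n) ℝ)
    (h1 : X *ᵥ 1 = 0) (hge : ∀ i j, -(1 / n : ℝ) ≤ X i j) :
    frob X ≤ Real.sqrt ((n : ℝ) - 1) := by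
  have hn' : (0 : ℝ) < n := Nat.cast_pos.mpr hn
  apply Real.sqrt_le_sqrt
  rw [trace_sq_eq]
  have hrow : ∀ i, ∑ j, (X i j) ^ 2 ≤ 1 - 1 / n := by
    intro i
    apply row_sq_sum hn
    · have := congrFun h1 i
      simpa [Matrix.mulVec, dotProduct] using this
    · exact fun j => hge i j
  calc ∑ i, ∑ j, (X i j) ^ 2 ≤ ∑ _i : Fin n, (1 - 1 / n : ℝ) :=
        Finset.sum_le_sum (fun i _ => hrow i)
  _ = n * (1 - 1 / n) := by simp [Finset.card_univ, mul_comm]; ring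
  _ = (n : ℝ) - 1 := by field_simp

/-- If all row and column sums of A equal N, then I_n - J_n ∈ P(A,A), and the
maximum of the Frobenius norm over P(A,A) equals √(n-1). -/
theorem one_sub_J_mem_Pset_and_isGreatest (n : ℕ) (hn : 1 ≤ n) (N : ℝ)
    (A : Matrix (Fin n) (Fin n) ℝ)
    (hA : A *ᵥ 1 = N • 1) (hAT : Aᵀ *ᵥ 1 = N • 1) :
    (1 - Jmat n) ∈ Pset A A ∧
    IsGreatest (frob '' Pset A A) (Real.sqrt ((n : ℝ) - 1)) := by
  have hn0 : 0 < n := hn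
  have hn' : (0 : ℝ) < n := Nat.cast_pos.mpr hn0
  have hnne : (n : ℝ) ≠ 0 := ne_of_gt hn'
  -- J facts
  have hJ1 : Jmat n *ᵥ 1 = 1 := by
    funext i
    simp [Jmat, Matrix.mulVec, dotProduct, Finset.card_univ]
    field_simp
  have hJT : (Jmat n)ᵀ = Jmat n := by
    funext i j; simp [Jmat, Matrix.transpose_apply]
  have hAJ : A * Jmat n = Jmat n * A := by
    funext i j
    have hrow : ∑ k, A i k = N := by
      have := congrFun hA i
      simpa [Matrix.mulVec, dotProduct] using this
    have hcol : ∑ k, A k j = N := by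
      have := congrFun hAT j
      simpa [Matrix.mulVec, dotProduct, Matrix.transpose_apply] using this
    simp only [Matrix.mul_apply, Jmat, Matrix.of_apply]
    rw [← Finset.sum_mul, hrow, ← Finset.mul_sum, hcol]
    ring
  have hmem : (1 - Jmat n) ∈ Pset A A := by
    refine ⟨⟨?_, ?_, ?_⟩, ?_⟩
    · rw [Matrix.sub_mulVec, Matrix.one_mulVec, hJ1, sub_self]
    · rw [Matrix.transpose_sub, Matrix.transpose_one, hJT,
        Matrix.sub_mulVec, Matrix.one_mulVec, hJ1, sub_self]
    · rw [Matrix.mul_sub, Matrix.sub_mul, Matrix.mul_one, Matrix.one_mul, hAJ]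
      abel
    · intro i j
      simp only [Matrix.sub_apply, Matrix.one_apply, Jmat, Matrix.of_apply]
      by_cases h : i = j <;> simp [h] <;> linarith [le_of_lt (one_div_pos.mpr hn')]
  have hfrobJ : frob (1 - Jmat n) = Real.sqrt ((n : ℝ) - 1) := by
    unfold frob
    congr 1
    rw [trace_sq_eq]
    have hrow : ∀ i : Fin n, ∑ j, ((1 - Jmat n) i j) ^ 2 = 1 - 1 / n := by
      intro i
      have : ∀ j, ((1 - Jmat n) i j) ^ 2
          = (if i = j then (1 : ℝ) else 0) - 2 / n * (if i = j then 1 else 0) + 1 / n ^ 2 := by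
        intro j
        simp only [Matrix.sub_apply, Matrix.one_apply, Jmat, Matrix.of_apply]
        by_cases h : i = j <;> simp [h] <;> field_simp <;> ring
      rw [Finset.sum_congr rfl (fun j _ => this j)]
      rw [Finset.sum_add_distrib, Finset.sum_sub_distrib, ← Finset.mul_sum]
      simp [Finset.card_univ]
      field_simp
      ring
    rw [Finset.sum_congr rfl (fun i _ => hrow i)]
    simp [Finset.card_univ]
    field_simp
  constructor
  · exact hmem
  constructor
  · exact ⟨1 - Jmat n, hmem, hfrobJ⟩
  · rintro y ⟨X, hX, rfl⟩
    exact frob_le hn0 X hX.1.1 hX.2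
end

section
/- Let n ≥ 1, N ∈ ℝ, and let A, B be real n×n matrices with A𝟏 = Aᵀ𝟏 = B𝟏 = Bᵀ𝟏 = N𝟏 (all row and column sums of both matrices equal to the same number N). Then A and B are permutationally similar if and only if there exists X ∈ P(A,B) with ‖X‖_F = √(n−1). -/
open Matrix MeasureTheory ENNReal

lemma mySum_eq_one_of_unique {n : ℕ} (f : Fin n → ℝ)
    (h01 : ∀ j, f j = 0 ∨ f j = 1) (h : ∃! j, f j = 1) :
    ∑ j, f j = 1 := by
  obtain ⟨j₀, hj₀, huniq⟩ := h
  rw [Finset.sum_eq_single j₀]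
  · exact hj₀
  · intro j _ hne
    rcases h01 j with h | h
    · exact h
    · exact absurd (huniq j h) hne
  · intro h; exact absurd (Finset.mem_univ j₀) h

lemma myExists_unique_of_sum {n : ℕ} (f : Fin n → ℝ)
    (h01 : ∀ j, f j = 0 ∨ f j = 1) (hs : ∑ j, f j = 1) :
    ∃! j, f j = 1 := by
  have hnonneg : ∀ j, (0:ℝ) ≤ f j := fun j => by rcases h01 j with h | h <;> simp [h]
  have hex : ∃ j, f j = 1 := by
    by_contra h
    push_neg at h
    have hz : ∀ j, f j = 0 := fun j => (h01 j).resolve_right (h j)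
    rw [Finset.sum_congr rfl (fun j _ => hz j)] at hs
    simp at hs
  obtain ⟨j₀, hj₀⟩ := hex
  refine ⟨j₀, hj₀, fun k hk => ?_⟩
  by_contra hne
  have h2 : (2:ℝ) ≤ ∑ j, f j := by
    have hsub := Finset.sum_le_sum_of_subset_of_nonneg
      (Finset.subset_univ ({k, j₀} : Finset (Fin n))) (fun j _ _ => hnonneg j)
    rw [Finset.sum_pair hne, hk, hj₀] at hsub
    linarith
  linarith

lemma myTrace_mul_transpose {n : ℕ} (X : Matrix (Fin n) (Fin n) ℝ) :
    (X * Xᵀ).trace = ∑ i, ∑ j, X i j ^ 2 := by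
  simp [Matrix.trace, Matrix.diag, Matrix.mul_apply, sq]

lemma myPerm_transpose_mul {n : ℕ} (P : Matrix (Fin n) (Fin n) ℝ)
    (hP : IsPermMatrix P) : Pᵀ * P = 1 := by
  obtain ⟨h01, hrow, hcol⟩ := hP
  ext j k
  rw [Matrix.mul_apply]
  simp only [Matrix.transpose_apply]
  by_cases hjk : j = k
  · subst hjk
    rw [Matrix.one_apply_eq]
    have hsq : ∀ i ∈ Finset.univ, P i j * P i j = P i j := fun i _ => by
      rcases h01 i j with h | h <;> simp [h]
    rw [Finset.sum_congr rfl hsq]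
    exact mySum_eq_one_of_unique _ (fun i => h01 i j) (hcol j)
  · rw [Matrix.one_apply_ne hjk]
    apply Finset.sum_eq_zero
    intro i _
    rcases h01 i j with h | h
    · simp [h]
    rcases h01 i k with h' | h'
    · simp [h']
    · obtain ⟨j', hj', hu⟩ := hrow i
      exact absurd ((hu j h).trans (hu k h').symm) hjk

lemma myPerm_mul_transpose {n : ℕ} (P : Matrix (Fin n) (Fin n) ℝ)
    (hP : IsPermMatrix P) : P * Pᵀ = 1 := by
  obtain ⟨h01, hrow, hcol⟩ := hP
  ext i k
  rw [Matrix.mul_apply]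
  simp only [Matrix.transpose_apply]
  by_cases hik : i = k
  · subst hik
    rw [Matrix.one_apply_eq]
    have hsq : ∀ j ∈ Finset.univ, P i j * P i j = P i j := fun j _ => by
      rcases h01 i j with h | h <;> simp [h]
    rw [Finset.sum_congr rfl hsq]
    exact mySum_eq_one_of_unique _ (fun j => h01 i j) (hrow i)
  · rw [Matrix.one_apply_ne hik]
    apply Finset.sum_eq_zero
    intro j _
    rcases h01 i j with h | h
    · simp [h]
    rcases h01 k j with h' | h'
    · simp [h']
    · obtain ⟨i', hi', hu⟩ := hcol j
      exact absurd ((hu i h).trans (hu k h').symm) hik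

lemma myRowsum {n : ℕ} (M : Matrix (Fin n) (Fin n) ℝ) (c : ℝ)
    (h : M *ᵥ 1 = c • 1) (i : Fin n) : ∑ j, M i j = c := by
  have := congrFun h i
  simpa [Matrix.mulVec, dotProduct] using this

lemma myMulJ {n : ℕ} (M : Matrix (Fin n) (Fin n) ℝ) (c : ℝ)
    (h : M *ᵥ 1 = c • 1) : M * Jmat n = c • Jmat n := by
  ext i j
  rw [Matrix.mul_apply]
  simp only [Jmat, Matrix.of_apply, Matrix.smul_apply, smul_eq_mul]
  rw [← Finset.sum_mul, myRowsum M c h i]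

lemma myJMul {n : ℕ} (M : Matrix (Fin n) (Fin n) ℝ) (c : ℝ)
    (h : Mᵀ *ᵥ 1 = c • 1) : Jmat n * M = c • Jmat n := by
  ext i j
  rw [Matrix.mul_apply]
  simp only [Jmat, Matrix.of_apply, Matrix.smul_apply, smul_eq_mul]
  have hc : ∑ k, M k j = c := by
    have := myRowsum Mᵀ c h j
    simpa using this
  rw [← Finset.mul_sum, hc, mul_comm]

/-- For A, B with all row and column sums equal to N, A and B are permutationally
similar iff some X ∈ P(A,B) has ‖X‖_F = √(n-1). -/
theorem permSimilar_iff_exists_frob_eq_sqrt (n : ℕ) (hn : 1 ≤ n) (N : ℝ)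
    (A B : Matrix (Fin n) (Fin n) ℝ)
    (hA : A *ᵥ 1 = N • 1) (hAT : Aᵀ *ᵥ 1 = N • 1)
    (hB : B *ᵥ 1 = N • 1) (hBT : Bᵀ *ᵥ 1 = N • 1) :
    (∃ P : Matrix (Fin n) (Fin n) ℝ, IsPermMatrix P ∧ B = P * A * Pᵀ) ↔
      ∃ X ∈ Pset A B, frob X = Real.sqrt ((n : ℝ) - 1) := by
  have hnpos : (0:ℝ) < n := by exact_mod_cast hn
  have hn0 : (n:ℝ) ≠ 0 := ne_of_gt hnpos
  constructor
  · rintro ⟨P, hP, hBP⟩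
    set X := Pᵀ - Jmat n with hX
    have hProw : ∀ i, ∑ j, P i j = 1 := fun i => mySum_eq_one_of_unique _ (hP.1 i) (hP.2.1 i)
    have hPcol : ∀ j, ∑ i, P i j = 1 := fun j =>
      mySum_eq_one_of_unique _ (fun i => hP.1 i j) (hP.2.2 j)
    have hXij : ∀ i j, X i j = P j i - 1 / n := fun i j => by
      simp [hX, Jmat, Matrix.sub_apply]
    refine ⟨X, ⟨⟨?_, ?_, ?_⟩, ?_⟩, ?_⟩
    · funext i
      simp only [Matrix.mulVec, dotProduct, Pi.zero_apply, Pi.one_apply, mul_one]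
      rw [Finset.sum_congr rfl (fun j _ => hXij i j), Finset.sum_sub_distrib, hPcol i,
        Finset.sum_const, Finset.card_univ, Fintype.card_fin, nsmul_eq_mul]
      field_simp
      norm_num
    · funext i
      simp only [Matrix.mulVec, dotProduct, Pi.zero_apply, Pi.one_apply, mul_one,
        Matrix.transpose_apply]
      rw [Finset.sum_congr rfl (fun j _ => hXij j i), Finset.sum_sub_distrib, hProw i,
        Finset.sum_const, Finset.card_univ, Fintype.card_fin, nsmul_eq_mul]
      field_simp
      norm_num
    · have h1 : A * Jmat n = N • Jmat n := myMulJ A N hA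
      have h2 : Jmat n * B = N • Jmat n := myJMul B N hBT
      have h3 : Pᵀ * B = A * Pᵀ := by
        rw [hBP, ← Matrix.mul_assoc, ← Matrix.mul_assoc, myPerm_transpose_mul P hP,
          Matrix.one_mul]
      rw [hX, Matrix.mul_sub, Matrix.sub_mul, h1, h2, h3]
      abel
    · intro i j
      rw [hXij i j]
      have : (0:ℝ) ≤ P j i := by rcases hP.1 j i with h | h <;> simp [h]
      linarith
    · have key : ∑ i, ∑ j, X i j ^ 2 = (n : ℝ) - 1 := by
        have hterm : ∀ i j, X i j ^ 2 = P j i - 2 / n * P j i + 1 / (n:ℝ) ^ 2 := by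
          intro i j
          rw [hXij i j]
          rcases hP.1 j i with h | h <;> rw [h] <;> ring
        calc ∑ i, ∑ j, X i j ^ 2 = ∑ _i : Fin n, (1 - 1 / (n:ℝ)) := by
              refine Finset.sum_congr rfl fun i _ => ?_
              rw [Finset.sum_congr rfl (fun j _ => hterm i j), Finset.sum_add_distrib,
                Finset.sum_sub_distrib, ← Finset.mul_sum, hPcol i, Finset.sum_const,
                Finset.card_univ, Fintype.card_fin, nsmul_eq_mul]
              field_simp
              ring
          _ = (n : ℝ) - 1 := by
              rw [Finset.sum_const, Finset.card_univ, Fintype.card_fin, nsmul_eq_mul]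
              field_simp
      rw [frob, myTrace_mul_transpose, key]
  · rintro ⟨X, ⟨⟨hr, hc, hcomm⟩, hge⟩, hfrob⟩
    set D := X + Jmat n with hD
    have hDij : ∀ i j, D i j = X i j + 1 / n := fun i j => by
      simp [hD, Jmat, Matrix.add_apply]
    have hXrow : ∀ i, ∑ j, X i j = 0 := fun i =>
      myRowsum X 0 (by rw [hr]; simp) i
    have hXcol : ∀ j, ∑ i, X i j = 0 := fun j => by
      have := myRowsum Xᵀ 0 (by rw [hc]; simp) j
      simpa using this
    have hDnn : ∀ i j, 0 ≤ D i j := fun i j => by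
      have := hge i j
      rw [hDij i j]
      linarith
    have hDrow : ∀ i, ∑ j, D i j = 1 := by
      intro i
      rw [Finset.sum_congr rfl (fun j _ => hDij i j), Finset.sum_add_distrib, hXrow i,
        Finset.sum_const, Finset.card_univ, Fintype.card_fin, nsmul_eq_mul]
      field_simp
      norm_num
    have hDcol : ∀ j, ∑ i, D i j = 1 := by
      intro j
      rw [Finset.sum_congr rfl (fun i _ => hDij i j), Finset.sum_add_distrib, hXcol j,
        Finset.sum_const, Finset.card_univ, Fintype.card_fin, nsmul_eq_mul]
      field_simp
      norm_num
    have hDle1 : ∀ i j, D i j ≤ 1 := by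
      intro i j
      have hle := Finset.single_le_sum (f := fun k => D i k) (fun k _ => hDnn i k)
        (Finset.mem_univ j)
      rw [hDrow i] at hle
      exact hle
    have htr : ∑ i, ∑ j, X i j ^ 2 = (n : ℝ) - 1 := by
      have h1 : (0:ℝ) ≤ ∑ i, ∑ j, X i j ^ 2 := by positivity
      have h2 : (0:ℝ) ≤ (n : ℝ) - 1 := by
        have : (1:ℝ) ≤ n := by exact_mod_cast hn
        linarith
      have hfe : Real.sqrt (∑ i, ∑ j, X i j ^ 2) = Real.sqrt ((n:ℝ) - 1) := by
        rw [← myTrace_mul_transpose, ← frob]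
        exact hfrob
      calc ∑ i, ∑ j, X i j ^ 2 = Real.sqrt (∑ i, ∑ j, X i j ^ 2) ^ 2 :=
            (Real.sq_sqrt h1).symm
        _ = Real.sqrt ((n:ℝ) - 1) ^ 2 := by rw [hfe]
        _ = (n : ℝ) - 1 := Real.sq_sqrt h2
    have hsumD : ∑ i, ∑ j, D i j = (n : ℝ) := by
      rw [Finset.sum_congr rfl (fun i _ => hDrow i), Finset.sum_const, Finset.card_univ,
        Fintype.card_fin, nsmul_eq_mul, mul_one]
    have hsumD2 : ∑ i, ∑ j, D i j ^ 2 = (n : ℝ) := by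
      have hexp : ∀ i j, D i j ^ 2 = X i j ^ 2 + 2 / n * X i j + 1 / (n:ℝ) ^ 2 := by
        intro i j
        rw [hDij i j]
        ring
      calc ∑ i, ∑ j, D i j ^ 2
          = ∑ i, ((∑ j, X i j ^ 2) + 2 / n * (∑ j, X i j) + (n:ℝ) * (1 / (n:ℝ) ^ 2)) := by
            refine Finset.sum_congr rfl fun i _ => ?_
            rw [Finset.sum_congr rfl (fun j _ => hexp i j), Finset.sum_add_distrib,
              Finset.sum_add_distrib, ← Finset.mul_sum, Finset.sum_const, Finset.card_univ,
              Fintype.card_fin, nsmul_eq_mul]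
        _ = ∑ i, ((∑ j, X i j ^ 2) + (n:ℝ) * (1 / (n:ℝ) ^ 2)) := by
            refine Finset.sum_congr rfl fun i _ => ?_
            rw [hXrow i]
            ring
        _ = (∑ i, ∑ j, X i j ^ 2) + (n:ℝ) * ((n:ℝ) * (1 / (n:ℝ) ^ 2)) := by
            rw [Finset.sum_add_distrib, Finset.sum_const, Finset.card_univ,
              Fintype.card_fin, nsmul_eq_mul]
        _ = (n : ℝ) := by
            rw [htr]
            field_simp
            ring
    have h01 : ∀ i j, D i j = 0 ∨ D i j = 1 := by
      have hzero : ∑ p : Fin n × Fin n, (D p.1 p.2 - D p.1 p.2 ^ 2) = 0 := by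
        rw [Fintype.sum_prod_type]
        simp_rw [Finset.sum_sub_distrib]
        rw [hsumD, hsumD2, sub_self]
      intro i j
      have hnn : ∀ p : Fin n × Fin n, p ∈ Finset.univ →
          0 ≤ D p.1 p.2 - D p.1 p.2 ^ 2 := by
        intro p _
        have h0 := hDnn p.1 p.2
        have h1 := hDle1 p.1 p.2
        nlinarith
      have heq := (Finset.sum_eq_zero_iff_of_nonneg hnn).mp hzero (i, j) (Finset.mem_univ _)
      have hmul : D i j * (D i j - 1) = 0 := by nlinarith [heq]
      rcases mul_eq_zero.mp hmul with h | h
      · exact Or.inl h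
      · exact Or.inr (by linarith)
    have hPD : IsPermMatrix Dᵀ := by
      refine ⟨fun i j => h01 j i, fun i => ?_, fun j => ?_⟩
      · exact myExists_unique_of_sum (fun j => D j i) (fun j => h01 j i) (hDcol i)
      · exact myExists_unique_of_sum (fun i => D j i) (fun i => h01 j i) (hDrow j)
    have hAD : A * D = D * B := by
      have hAX : A * X = X * B := sub_eq_zero.mp hcomm
      rw [hD, Matrix.mul_add, Matrix.add_mul, hAX, myMulJ A N hA, myJMul B N hBT]
    refine ⟨Dᵀ, hPD, ?_⟩
    have horth : Dᵀ * D = 1 := by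
      have := myPerm_mul_transpose Dᵀ hPD
      rwa [Matrix.transpose_transpose] at this
    rw [Matrix.transpose_transpose, Matrix.mul_assoc, hAD, ← Matrix.mul_assoc, horth,
      Matrix.one_mul]
end

section
/- Let n ≥ 1 and S, T ∈ ℝ^{n×n}. Every X ∈ P₀(S,T) with ‖X‖_F ≤ 1/n lies in P(S,T); that is, P(S,T) contains the ball of radius 1/n centered at the origin of the subspace P₀(S,T). Consequently, the linear span of P(S,T) equals P₀(S,T), so the dimension of the convex set P(S,T) equals the dimension of the subspace P₀(S,T). -/
open Matrix MeasureTheory ENNReal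

lemma frob_sq {n : ℕ} (X : Matrix (Fin n) (Fin n) ℝ) :
    (X * Xᵀ).trace = ∑ i, ∑ j, (X i j)^2 := by
  simp [Matrix.trace, Matrix.mul_apply, Matrix.diag, sq]

lemma frob_nonneg {n : ℕ} (X : Matrix (Fin n) (Fin n) ℝ) : 0 ≤ frob X :=
  Real.sqrt_nonneg _

lemma abs_entry_le_frob {n : ℕ} (X : Matrix (Fin n) (Fin n) ℝ) (i j : Fin n) :
    |X i j| ≤ frob X := by
  rw [frob, frob_sq]
  have h1 : (X i j)^2 ≤ ∑ i, ∑ j, (X i j)^2 := by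
    calc (X i j)^2 ≤ ∑ j, (X i j)^2 :=
          Finset.single_le_sum (f := fun j => (X i j)^2)
            (fun _ _ => sq_nonneg _) (Finset.mem_univ j)
      _ ≤ ∑ i, ∑ j, (X i j)^2 :=
          Finset.single_le_sum (f := fun i => ∑ j, (X i j)^2)
            (fun _ _ => Finset.sum_nonneg fun _ _ => sq_nonneg _) (Finset.mem_univ i)
  calc |X i j| = Real.sqrt ((X i j)^2) := (Real.sqrt_sq_eq_abs _).symm
    _ ≤ _ := Real.sqrt_le_sqrt h1

lemma frob_smul {n : ℕ} (c : ℝ) (X : Matrix (Fin n) (Fin n) ℝ) :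
    frob (c • X) = |c| * frob X := by
  rw [frob, frob, frob_sq, frob_sq]
  have : ∑ i, ∑ j, ((c • X) i j)^2 = c^2 * ∑ i, ∑ j, (X i j)^2 := by
    simp [Finset.mul_sum, mul_pow]
  rw [this, Real.sqrt_mul (sq_nonneg c), Real.sqrt_sq_eq_abs]

lemma frob_pos {n : ℕ} {X : Matrix (Fin n) (Fin n) ℝ} (hX : X ≠ 0) : 0 < frob X := by
  have : ∃ i j, X i j ≠ 0 := by
    by_contra h
    push_neg at h
    exact hX (by ext i j; simpa using h i j)
  obtain ⟨i, j, hij⟩ := this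
  have h := abs_entry_le_frob X i j
  have : 0 < |X i j| := abs_pos.mpr hij
  linarith

/-- P(S,T) contains the ball of radius 1/n about the origin inside P₀(S,T), and
consequently the linear span of P(S,T) equals P₀(S,T); in particular the dimension
of the convex set P(S,T) equals that of the subspace P₀(S,T). -/
theorem ball_subset_Pset_and_span_eq (n : ℕ) (hn : 1 ≤ n)
    (S T : Matrix (Fin n) (Fin n) ℝ) :
    (∀ X ∈ P0 S T, frob X ≤ 1 / n → X ∈ Pset S T) ∧
    (Submodule.span ℝ (Pset S T) : Set (Matrix (Fin n) (Fin n) ℝ)) = P0 S T ∧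
    Module.finrank ℝ (Submodule.span ℝ (Pset S T)) = Module.finrank ℝ (P0sub S T) := by
  have hn0 : (0:ℝ) < n := by exact_mod_cast hn
  have part1 : ∀ X ∈ P0 S T, frob X ≤ 1 / n → X ∈ Pset S T := by
    intro X hX hfr
    refine ⟨hX, fun i j => ?_⟩
    have h := abs_entry_le_frob X i j
    have := neg_abs_le (X i j)
    linarith
  refine ⟨part1, ?_⟩
  have hspan : Submodule.span ℝ (Pset S T) = P0sub S T := by
    apply le_antisymm
    · rw [Submodule.span_le]
      intro X hX
      exact hX.1
    · intro X hX
      by_cases h0 : X = 0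
      · simp [h0]
      · have hf : 0 < frob X := frob_pos h0
        set c : ℝ := 1 / (n * frob X) with hc
        have hcpos : 0 < c := by positivity
        have hmem : c • X ∈ Pset S T := by
          apply part1
          · exact (P0sub S T).smul_mem c hX
          · rw [frob_smul, abs_of_pos hcpos, hc]
            have heq : 1 / ((n:ℝ) * frob X) * frob X = 1 / n := by
              field_simp
            rw [heq]
        have : X = (n * frob X) • (c • X) := by
          rw [smul_smul, hc, mul_one_div, div_self (by positivity), one_smul]
        rw [this]
        exact Submodule.smul_mem _ _ (Submodule.subset_span hmem)
  constructor
  · rw [hspan]; rfl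
  · rw [hspan]
end

section
/- Let n ≥ 2 and let A be a real symmetric n×n matrix with A𝟏 = λ₀𝟏 for some λ₀ ∈ ℝ, such that the eigenspace ker(A − λ₀ I_n) is one-dimensional. Then the dimension of the subspace P₀(A,A) equals (Σ_λ (dim ker(A − λ I_n))²) − 1, where the sum runs over all (real) eigenvalues λ of A. In particular, writing the distinct eigenvalues as λ₀ > λ₁ > … > λ_μ with multiplicities m₀ = 1, m₁, …, m_μ, this dimension is Σ_{i=1}^{μ} m_i². -/
open Matrix MeasureTheory ENNReal

section Aux

open Matrix Polynomial

variable {n : ℕ}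

/-- The commutator map `X ↦ B X - X B` as a linear map. -/
noncomputable def commL (B : Matrix (Fin n) (Fin n) ℝ) :
    Matrix (Fin n) (Fin n) ℝ →ₗ[ℝ] Matrix (Fin n) (Fin n) ℝ :=
  LinearMap.mulLeft ℝ B - LinearMap.mulRight ℝ B

lemma commL_apply (B X : Matrix (Fin n) (Fin n) ℝ) :
    commL B X = B * X - X * B := rfl

lemma mem_ker_commL_diagonal (d : Fin n → ℝ) (X : Matrix (Fin n) (Fin n) ℝ) :
    X ∈ LinearMap.ker (commL (diagonal d)) ↔ ∀ i j, d i ≠ d j → X i j = 0 := by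
  rw [LinearMap.mem_ker, commL_apply]
  constructor
  · intro h i j hij
    have h2 := congrFun (congrFun h i) j
    simp only [Matrix.sub_apply, Matrix.diagonal_mul, Matrix.mul_diagonal,
      Matrix.zero_apply] at h2
    have h3 : (d i - d j) * X i j = 0 := by linear_combination h2
    exact (mul_eq_zero.mp h3).resolve_left (sub_ne_zero.mpr hij)
  · intro h
    ext i j
    simp only [Matrix.sub_apply, Matrix.diagonal_mul, Matrix.mul_diagonal, Matrix.zero_apply]
    by_cases hij : d i = d j
    · rw [hij]; ring
    · rw [h i j hij]; ring

lemma finrank_ker_commL_diagonal (d : Fin n → ℝ) :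
    Module.finrank ℝ (LinearMap.ker (commL (diagonal d))) =
      (Finset.univ.filter fun p : Fin n × Fin n => d p.1 = d p.2).card := by
  classical
  let e : LinearMap.ker (commL (diagonal d)) ≃ₗ[ℝ]
      ({p : Fin n × Fin n // d p.1 = d p.2} → ℝ) :=
  { toFun := fun X s => (X : Matrix (Fin n) (Fin n) ℝ) s.1.1 s.1.2
    map_add' := fun X Y => by funext s; simp
    map_smul' := fun c X => by funext s; simp
    invFun := fun g => ⟨Matrix.of fun i j => if h : d i = d j then g ⟨(i, j), h⟩ else 0, by
      rw [mem_ker_commL_diagonal]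
      intro i j hij
      simp [Matrix.of_apply, dif_neg hij]⟩
    left_inv := fun X => by
      apply Subtype.ext
      ext i j
      simp only [Matrix.of_apply]
      by_cases hij : d i = d j
      · rw [dif_pos hij]
      · rw [dif_neg hij]
        exact ((mem_ker_commL_diagonal d X.1).mp X.2 i j hij).symm
    right_inv := fun g => by
      funext s
      simp only [Matrix.of_apply, dif_pos s.2] }
  rw [e.finrank_eq, Module.finrank_fintype_fun_eq_card, Fintype.card_subtype]

lemma finrank_ker_commL_conj (U M : Matrix (Fin n) (Fin n) ℝ)
    (hU : star U * U = 1) (hU' : U * star U = 1) :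
    Module.finrank ℝ (LinearMap.ker (commL (U * M * star U))) =
      Module.finrank ℝ (LinearMap.ker (commL M)) := by
  have cancel1 : ∀ Y : Matrix (Fin n) (Fin n) ℝ, star U * (U * Y) = Y := by
    intro Y; rw [← Matrix.mul_assoc, hU, Matrix.one_mul]
  have cancel2 : ∀ Y : Matrix (Fin n) (Fin n) ℝ, U * (star U * Y) = Y := by
    intro Y; rw [← Matrix.mul_assoc, hU', Matrix.one_mul]
  have hconj : ∀ X : Matrix (Fin n) (Fin n) ℝ, star U * (U * X * star U) * U = X := by
    intro X
    rw [Matrix.mul_assoc U X (star U), cancel1, Matrix.mul_assoc X (star U) U, hU,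
      Matrix.mul_one]
  have hconj' : ∀ X : Matrix (Fin n) (Fin n) ℝ, U * (star U * X * U) * star U = X := by
    intro X
    rw [Matrix.mul_assoc (star U) X U, cancel2, Matrix.mul_assoc X U (star U), hU',
      Matrix.mul_one]
  let e : Matrix (Fin n) (Fin n) ℝ ≃ₗ[ℝ] Matrix (Fin n) (Fin n) ℝ :=
    LinearEquiv.ofLinear
      ((LinearMap.mulRight ℝ U).comp (LinearMap.mulLeft ℝ (star U)))
      ((LinearMap.mulRight ℝ (star U)).comp (LinearMap.mulLeft ℝ U))
      (by ext X : 1; simpa using hconj X)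
      (by ext X : 1; simpa using hconj' X)
  have key : ∀ X : Matrix (Fin n) (Fin n) ℝ,
      star U * ((U * M * star U) * X - X * (U * M * star U)) * U =
        M * (star U * X * U) - (star U * X * U) * M := by
    intro X
    simp only [Matrix.mul_sub, Matrix.sub_mul, Matrix.mul_assoc, cancel1, cancel2, hU, hU',
      Matrix.mul_one, Matrix.one_mul]
  have hker : LinearMap.ker (commL (U * M * star U)) =
      Submodule.comap (e : Matrix (Fin n) (Fin n) ℝ →ₗ[ℝ] Matrix (Fin n) (Fin n) ℝ)
        (LinearMap.ker (commL M)) := by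
    ext X
    simp only [Submodule.mem_comap, LinearMap.mem_ker, commL_apply]
    have heX : (e : Matrix (Fin n) (Fin n) ℝ →ₗ[ℝ] Matrix (Fin n) (Fin n) ℝ) X
        = star U * X * U := rfl
    rw [heX]
    constructor
    · intro h
      rw [← key X, h, Matrix.mul_zero, Matrix.zero_mul]
    · intro h
      have h2 := key X
      rw [h] at h2
      calc (U * M * star U) * X - X * (U * M * star U)
          = U * (star U * ((U * M * star U) * X - X * (U * M * star U)) * U) * star U :=
            (hconj' _).symm
        _ = 0 := by rw [h2, Matrix.mul_zero, Matrix.zero_mul]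
  rw [hker, Submodule.comap_equiv_eq_map_symm, LinearEquiv.finrank_map_eq]

lemma finrank_ker_toLin'_conj (U : Matrix (Fin n) (Fin n) ℝ)
    (hU : star U * U = 1) (hU' : U * star U = 1) (w : Fin n → ℝ) :
    Module.finrank ℝ (LinearMap.ker (Matrix.toLin' (U * diagonal w * star U))) =
      (Finset.univ.filter fun i : Fin n => w i = 0).card := by
  classical
  have hdetU : IsUnit U.det := by
    refine IsUnit.of_mul_eq_one (star U).det ?_
    rw [← Matrix.det_mul, hU', Matrix.det_one]
  have hdetsU : IsUnit (star U).det := by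
    refine IsUnit.of_mul_eq_one U.det ?_
    rw [← Matrix.det_mul, hU, Matrix.det_one]
  have hrank : (U * diagonal w * star U).rank = Fintype.card {i // w i ≠ 0} := by
    rw [Matrix.rank_mul_eq_left_of_isUnit_det _ _ hdetsU,
      Matrix.rank_mul_eq_right_of_isUnit_det _ _ hdetU, Matrix.rank_diagonal]
  have h1 := LinearMap.finrank_range_add_finrank_ker
    (Matrix.toLin' (U * diagonal w * star U))
  rw [Matrix.toLin'_apply'] at h1
  have h2 : Module.finrank ℝ
      (LinearMap.range (U * diagonal w * star U).mulVecLin) = Fintype.card {i // w i ≠ 0} := by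
    rw [← Matrix.rank, hrank]
  rw [h2, Module.finrank_fintype_fun_eq_card, Fintype.card_fin] at h1
  have h3 : Fintype.card {i // w i ≠ 0} + Fintype.card {i // w i = 0} = n := by
    have hcompl := Fintype.card_subtype_compl (p := fun i : Fin n => w i = 0)
    have hle := Fintype.card_subtype_le (fun i : Fin n => w i = 0)
    simp only [Fintype.card_fin] at hcompl hle
    simp only [ne_eq]
    omega
  have h4 : Fintype.card {i // w i = 0} =
      (Finset.univ.filter fun i : Fin n => w i = 0).card := Fintype.card_subtype _
  have h5 : Module.finrank ℝ
      (LinearMap.ker (U * diagonal w * star U).mulVecLin) = Fintype.card {i // w i = 0} := by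
    omega
  rw [Matrix.toLin'_apply', h5, h4]

lemma charpoly_conj_aux (U V M : Matrix (Fin n) (Fin n) ℝ) (hUV : U * V = 1) :
    (U * M * V).charpoly = M.charpoly := by
  have hmap : (U.map (C : ℝ → ℝ[X])) * (V.map (C : ℝ → ℝ[X])) = 1 := by
    rw [← Matrix.map_mul (f := (C : ℝ →+* ℝ[X])), hUV]
    exact Matrix.map_one _ (map_zero C) (map_one C)
  have hcomm : ∀ P : Matrix (Fin n) (Fin n) ℝ[X],
      P * Matrix.scalar (Fin n) (X : ℝ[X]) = Matrix.scalar (Fin n) (X : ℝ[X]) * P := by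
    intro P
    exact ((Matrix.scalar_commute (X : ℝ[X]) (fun r => Commute.all _ _) P).eq).symm
  have key : charmatrix (U * M * V) =
      U.map (C : ℝ → ℝ[X]) * charmatrix M * V.map (C : ℝ → ℝ[X]) := by
    unfold Matrix.charmatrix
    simp only [RingHom.mapMatrix_apply]
    rw [Matrix.mul_sub, Matrix.sub_mul]
    congr 1
    · rw [hcomm, Matrix.mul_assoc, hmap, Matrix.mul_one]
    · rw [Matrix.map_mul (f := (C : ℝ →+* ℝ[X])), Matrix.map_mul (f := (C : ℝ →+* ℝ[X]))]
  rw [Matrix.charpoly, Matrix.charpoly, key, Matrix.det_mul, Matrix.det_mul]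
  have hdet : (U.map (C : ℝ → ℝ[X])).det * (V.map (C : ℝ → ℝ[X])).det = 1 := by
    rw [← Matrix.det_mul, hmap, Matrix.det_one]
  calc (U.map (C : ℝ → ℝ[X])).det * (charmatrix M).det * (V.map (C : ℝ → ℝ[X])).det
      = ((U.map (C : ℝ → ℝ[X])).det * (V.map (C : ℝ → ℝ[X])).det) * (charmatrix M).det := by
        ring
    _ = (charmatrix M).det := by rw [hdet, one_mul]

lemma charpoly_diagonal_real (d : Fin n → ℝ) :
    (diagonal d).charpoly = ∏ i, (X - C (d i)) := by
  rw [Matrix.charpoly_of_upperTriangular _ (Matrix.blockTriangular_diagonal d)]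
  simp

lemma roots_charpoly_conj_diagonal (U : Matrix (Fin n) (Fin n) ℝ) (d : Fin n → ℝ)
    (hU' : U * star U = 1) :
    (U * diagonal d * star U).charpoly.roots.toFinset = Finset.univ.image d := by
  rw [charpoly_conj_aux _ _ _ hU', charpoly_diagonal_real]
  have h1 : (∏ i, ((X : ℝ[X]) - C (d i))) =
      ((Finset.univ.val.map d).map fun a => (X : ℝ[X]) - C a).prod := by
    rw [Multiset.map_map]
    rfl
  rw [h1, Polynomial.roots_multiset_prod_X_sub_C]
  ext l
  simp [List.mem_ofFn]

end Aux

/-- For a symmetric A with A𝟏 = λ₀𝟏 and one-dimensional eigenspace at λ₀, the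
dimension of P₀(A,A) is (Σ over eigenvalues λ of (dim ker(A - λI))²) - 1. -/
theorem finrank_P0sub_eq_sum_sq_mult (n : ℕ) (hn : 2 ≤ n)
    (A : Matrix (Fin n) (Fin n) ℝ) (l0 : ℝ)
    (hsym : A.IsSymm) (hA1 : A *ᵥ 1 = l0 • 1)
    (hmult : Module.finrank ℝ (LinearMap.ker (Matrix.toLin' (A - l0 • 1))) = 1) :
    Module.finrank ℝ (P0sub A A) =
      (∑ l ∈ A.charpoly.roots.toFinset,
        (Module.finrank ℝ (LinearMap.ker (Matrix.toLin' (A - l • 1)))) ^ 2) - 1 := by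
  classical
  have hA : A.IsHermitian := by
    rwa [Matrix.IsHermitian, Matrix.conjTranspose_eq_transpose_of_trivial]
  set U : Matrix (Fin n) (Fin n) ℝ := ↑(hA.eigenvectorUnitary) with hUdef
  set d : Fin n → ℝ := hA.eigenvalues with hddef
  have hU : star U * U = 1 := Matrix.mem_unitaryGroup_iff'.mp (hA.eigenvectorUnitary).2
  have hU' : U * star U = 1 := Matrix.mem_unitaryGroup_iff.mp (hA.eigenvectorUnitary).2
  have hspec : A = U * Matrix.diagonal d * star U := by
    have h := hA.spectral_theorem
    rwa [RCLike.ofReal_real_eq_id, Function.id_comp] at h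
  -- eigenvalue multiplicities
  have hml : ∀ l : ℝ, Module.finrank ℝ (LinearMap.ker (Matrix.toLin' (A - l • 1))) =
      (Finset.univ.filter fun i : Fin n => d i = l).card := by
    intro l
    have hAl : A - l • 1 = U * Matrix.diagonal (fun i => d i - l) * star U := by
      have hd : Matrix.diagonal (fun i => d i - l) =
          Matrix.diagonal d - l • (1 : Matrix (Fin n) (Fin n) ℝ) := by
        rw [Matrix.smul_one_eq_diagonal, ← Matrix.diagonal_sub]
      rw [hd, Matrix.mul_sub, Matrix.sub_mul, ← hspec, Matrix.mul_smul, Matrix.smul_mul,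
        Matrix.mul_one, hU']
    rw [hAl, finrank_ker_toLin'_conj U hU hU']
    congr 1
    apply Finset.filter_congr
    intro i _
    simp [sub_eq_zero]
  have hroots : A.charpoly.roots.toFinset = Finset.univ.image d := by
    rw [hspec]
    exact roots_charpoly_conj_diagonal U d hU'
  -- the commutant
  have hC : Module.finrank ℝ (LinearMap.ker (commL A)) =
      (Finset.univ.filter fun p : Fin n × Fin n => d p.1 = d p.2).card := by
    rw [hspec, finrank_ker_commL_conj _ _ hU hU', finrank_ker_commL_diagonal]
  have hfiber : ∀ l : ℝ,
      ((Finset.univ.filter fun p : Fin n × Fin n => d p.1 = d p.2).filter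
        fun p => d p.1 = l) =
      (Finset.univ.filter fun i : Fin n => d i = l) ×ˢ
        (Finset.univ.filter fun i : Fin n => d i = l) := by
    intro l
    ext p
    simp only [Finset.mem_filter, Finset.mem_product, Finset.mem_univ, true_and]
    constructor
    · rintro ⟨h1, h2⟩
      exact ⟨h2, h1 ▸ h2⟩
    · rintro ⟨h1, h2⟩
      exact ⟨h1.trans h2.symm, h1⟩
  have hsum : (∑ l ∈ A.charpoly.roots.toFinset,
      (Module.finrank ℝ (LinearMap.ker (Matrix.toLin' (A - l • 1)))) ^ 2) =
      Module.finrank ℝ (LinearMap.ker (commL A)) := by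
    rw [hroots, hC]
    rw [Finset.card_eq_sum_card_fiberwise
      (f := fun p : Fin n × Fin n => d p.1) (t := Finset.univ.image d)
      (by intro p _; exact Finset.mem_image_of_mem _ (Finset.mem_univ _))]
    apply Finset.sum_congr rfl
    intro l _
    rw [hml l, hfiber l, Finset.card_product, sq]
  -- the kernel at l0 is spanned by the all-ones vector
  have hone_ne : (1 : Fin n → ℝ) ≠ 0 := by
    intro h
    have := congrFun h ⟨0, by omega⟩
    simp at this
  have hone_mem : (1 : Fin n → ℝ) ∈ LinearMap.ker (Matrix.toLin' (A - l0 • 1)) := by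
    rw [LinearMap.mem_ker, Matrix.toLin'_apply, Matrix.sub_mulVec, hA1,
      Matrix.smul_mulVec, Matrix.one_mulVec, sub_self]
  have hspan : (Submodule.span ℝ {(1 : Fin n → ℝ)}) =
      LinearMap.ker (Matrix.toLin' (A - l0 • 1)) := by
    apply Submodule.eq_of_le_of_finrank_eq
    · rw [Submodule.span_singleton_le_iff_mem]
      exact hone_mem
    · rw [finrank_span_singleton hone_ne, hmult]
  have hker_one : ∀ v : Fin n → ℝ, A *ᵥ v = l0 • v → ∃ c : ℝ, v = c • (1 : Fin n → ℝ) := by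
    intro v hv
    have hv' : v ∈ LinearMap.ker (Matrix.toLin' (A - l0 • 1)) := by
      rw [LinearMap.mem_ker, Matrix.toLin'_apply, Matrix.sub_mulVec, hv,
        Matrix.smul_mulVec, Matrix.one_mulVec, sub_self]
    rw [← hspan] at hv'
    obtain ⟨c, hc⟩ := Submodule.mem_span_singleton.mp hv'
    exact ⟨c, hc.symm⟩
  -- row sums of A
  have hrowsum : ∀ i, ∑ k, A i k = l0 := by
    intro i
    have := congrFun hA1 i
    simpa [Matrix.mulVec, dotProduct] using this
  have hcolsum : ∀ j, ∑ k, A k j = l0 := by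
    intro j
    have heq : ∀ k, A k j = A j k := by
      intro k
      have := congrFun (congrFun hsym j) k
      simpa [Matrix.transpose_apply] using this
    rw [Finset.sum_congr rfl fun k _ => heq k]
    exact hrowsum j
  have hn0 : (n : ℝ) ≠ 0 := Nat.cast_ne_zero.mpr (by omega)
  set i0 : Fin n := ⟨0, by omega⟩ with hi0
  set Csub : Submodule ℝ (Matrix (Fin n) (Fin n) ℝ) := LinearMap.ker (commL A) with hCsub
  -- the averaging matrix J lies in the commutant
  have hJcomm : Jmat n ∈ Csub := by
    rw [hCsub, LinearMap.mem_ker, commL_apply, sub_eq_zero]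
    ext i j
    rw [Matrix.mul_apply, Matrix.mul_apply]
    simp only [Jmat, Matrix.of_apply]
    rw [← Finset.sum_mul, ← Finset.mul_sum, hcolsum j, hrowsum i, mul_comm]
  have hJone : (Jmat n *ᵥ (1 : Fin n → ℝ)) i0 = 1 := by
    simp only [Jmat, Matrix.mulVec, dotProduct, Matrix.of_apply, Pi.one_apply, mul_one]
    rw [Finset.sum_const, Finset.card_univ, Fintype.card_fin, nsmul_eq_mul]
    field_simp
  -- the evaluation functional on the commutant
  let φ : Csub →ₗ[ℝ] ℝ :=
  { toFun := fun X => ((X : Matrix (Fin n) (Fin n) ℝ) *ᵥ (1 : Fin n → ℝ)) i0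
    map_add' := fun X Y => by
      simp [Matrix.add_mulVec]
    map_smul' := fun c X => by
      simp [Matrix.smul_mulVec] }
  have hφJ : φ ⟨Jmat n, hJcomm⟩ = 1 := hJone
  have hφsurj : Function.Surjective φ := by
    intro c
    refine ⟨c • ⟨Jmat n, hJcomm⟩, ?_⟩
    rw [LinearMap.map_smul, hφJ, smul_eq_mul, mul_one]
  have hrange : LinearMap.range φ = ⊤ := LinearMap.range_eq_top.mpr hφsurj
  have hrn := LinearMap.finrank_range_add_finrank_ker φ
  rw [hrange, finrank_top, Module.finrank_self] at hrn
  -- identify P0sub with the kernel of φ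
  have hP0 : P0sub A A = Submodule.map Csub.subtype (LinearMap.ker φ) := by
    apply le_antisymm
    · intro X hX
      obtain ⟨h1, h2, h3⟩ := hX
      have hXC : X ∈ Csub := by
        rw [hCsub, LinearMap.mem_ker, commL_apply]
        exact h3
      refine Submodule.mem_map.mpr ⟨⟨X, hXC⟩, ?_, rfl⟩
      show ((X : Matrix (Fin n) (Fin n) ℝ) *ᵥ (1 : Fin n → ℝ)) i0 = 0
      rw [h1]
      rfl
    · intro X hX
      obtain ⟨⟨Y, hYC⟩, hYker, hYX⟩ := Submodule.mem_map.mp hX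
      have hYX' : Y = X := hYX
      subst hYX'
      have hYcomm : A * Y = Y * A := by
        have := LinearMap.mem_ker.mp hYC
        rw [commL_apply] at this
        exact sub_eq_zero.mp this
      have hY0 : (Y *ᵥ (1 : Fin n → ℝ)) i0 = 0 := hYker
      -- Y 𝟏 is an eigenvector for l0
      have hYeig : A *ᵥ (Y *ᵥ (1 : Fin n → ℝ)) = l0 • (Y *ᵥ (1 : Fin n → ℝ)) := by
        rw [Matrix.mulVec_mulVec, hYcomm, ← Matrix.mulVec_mulVec, hA1, Matrix.mulVec_smul]
      obtain ⟨c, hc⟩ := hker_one _ hYeig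
      have hc0 : c = 0 := by
        have := congrFun hc i0
        simp only [Pi.smul_apply, Pi.one_apply, smul_eq_mul, mul_one] at this
        rw [hY0] at this
        exact this.symm
      have hY1 : Y *ᵥ (1 : Fin n → ℝ) = 0 := by
        rw [hc, hc0, zero_smul]
      -- the transpose
      have hYTcomm : A * Yᵀ = Yᵀ * A := by
        have := congrArg Matrix.transpose hYcomm
        rw [Matrix.transpose_mul, Matrix.transpose_mul, hsym.eq] at this
        exact this.symm
      have hYTeig : A *ᵥ (Yᵀ *ᵥ (1 : Fin n → ℝ)) = l0 • (Yᵀ *ᵥ (1 : Fin n → ℝ)) := by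
        rw [Matrix.mulVec_mulVec, hYTcomm, ← Matrix.mulVec_mulVec, hA1, Matrix.mulVec_smul]
      obtain ⟨c', hc'⟩ := hker_one _ hYTeig
      have hsumrow : ∀ j, ∑ i, Y j i = 0 := by
        intro j
        have := congrFun hY1 j
        simpa [Matrix.mulVec, dotProduct] using this
      have hsumT : ∑ i, (Yᵀ *ᵥ (1 : Fin n → ℝ)) i = 0 := by
        simp only [Matrix.mulVec, dotProduct, Matrix.transpose_apply, Pi.one_apply,
          mul_one]
        rw [Finset.sum_comm]
        simp [hsumrow]
      have hc'0 : c' = 0 := by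
        rw [hc'] at hsumT
        simp only [Pi.smul_apply, Pi.one_apply, smul_eq_mul, mul_one, Finset.sum_const,
          Finset.card_univ, Fintype.card_fin, nsmul_eq_mul] at hsumT
        have := mul_eq_zero.mp hsumT
        rcases this with h | h
        · exact absurd h hn0
        · exact h
      have hYT1 : Yᵀ *ᵥ (1 : Fin n → ℝ) = 0 := by
        rw [hc', hc'0, zero_smul]
      exact ⟨hY1, hYT1, sub_eq_zero.mpr hYcomm⟩
  have hfin : Module.finrank ℝ (P0sub A A) = Module.finrank ℝ (LinearMap.ker φ) := by
    rw [hP0, Submodule.finrank_map_subtype_eq]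
  rw [hfin, hsum]
  omega
end

section
/- Let n ≥ 1 and let A, B be real symmetric n×n matrices with the same characteristic polynomial, with A𝟏 = λ₀𝟏 and B𝟏 = λ₀𝟏 for some λ₀ ∈ ℝ, and suppose dim ker(A − λ₀ I_n) = 1. Then there exists a real orthogonal n×n matrix Q with Q𝟏 = 𝟏 and B = Q A Qᵀ. -/
open Matrix MeasureTheory ENNReal

section AuxSpectral

open Matrix Polynomial Finset

private lemma aux_cancel {n : ℕ} {M N : Matrix (Fin n) (Fin n) ℝ} (h : M * N = 1)
    (X : Matrix (Fin n) (Fin n) ℝ) : M * (N * X) = X := by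
  rw [← Matrix.mul_assoc, h, Matrix.one_mul]

private lemma charpoly_orth_conj (n : ℕ) (U D : Matrix (Fin n) (Fin n) ℝ) (hU : U * Uᵀ = 1) :
    (U * D * Uᵀ).charpoly = D.charpoly := by
  unfold Matrix.charpoly
  have hone : ((1 : Matrix (Fin n) (Fin n) ℝ)).map (C : ℝ →+* ℝ[X]) = 1 :=
    Matrix.map_one _ (map_zero C) (map_one C)
  have hUU : U.map (C : ℝ →+* ℝ[X]) * Uᵀ.map C = 1 := by
    rw [← Matrix.map_mul, hU, hone]
  have hcm : charmatrix (U * D * Uᵀ) = U.map C * charmatrix D * Uᵀ.map C := by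
    rw [charmatrix, charmatrix]
    rw [mul_sub, sub_mul]
    congr 1
    · rw [scalar_apply, ← Matrix.smul_one_eq_diagonal, mul_smul_comm, smul_mul_assoc,
        Matrix.mul_one, hUU, smul_one_eq_diagonal]
    · simp only [RingHom.mapMatrix_apply, Matrix.map_mul]
  have hd : (U.map (C : ℝ →+* ℝ[X])).det * (Uᵀ.map (C : ℝ →+* ℝ[X])).det = 1 := by
    rw [← det_mul, hUU, det_one]
  rw [hcm, det_mul, det_mul, mul_right_comm, hd, one_mul]

private lemma charpoly_diag (n : ℕ) (d : Fin n → ℝ) :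
    (Matrix.diagonal d).charpoly = ∏ i, (X - C (d i)) := by
  rw [Matrix.charpoly_of_upperTriangular _ (Matrix.blockTriangular_diagonal d)]
  simp

private lemma multiset_eq_of_prod (n : ℕ) (μ ν : Fin n → ℝ)
    (h : ∏ i, (X - C (μ i)) = ∏ i, (X - C (ν i))) :
    Finset.univ.val.map μ = Finset.univ.val.map ν := by
  have h1 := roots_multiset_prod_X_sub_C (univ.val.map μ)
  have h2 := roots_multiset_prod_X_sub_C (univ.val.map ν)
  rw [Multiset.map_map] at h1 h2
  rw [← h1, ← h2]
  exact congrArg _ (by simpa [Finset.prod] using h)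

private lemma exists_perm_comp (n : ℕ) (μ ν : Fin n → ℝ)
    (h : Finset.univ.val.map μ = Finset.univ.val.map ν) :
    ∃ σ : Equiv.Perm (Fin n), ν = μ ∘ σ := by
  have hofn : ∀ f : Fin n → ℝ, (↑(List.ofFn f) : Multiset ℝ) = Finset.univ.val.map f := by
    intro f
    rw [List.ofFn_eq_map]
    simp [Fin.univ_def, Finset.univ]
    rfl
  have hperm : (List.ofFn μ).Perm (List.ofFn ν) := by
    rw [← Multiset.coe_eq_coe, hofn, hofn]; exact h
  have hp : (List.ofFn (μ ∘ Tuple.sort μ)).Perm (List.ofFn (ν ∘ Tuple.sort ν)) :=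
    ((Tuple.sort μ).ofFn_comp_perm μ).trans
      (hperm.trans ((Tuple.sort ν).ofFn_comp_perm ν).symm)
  have hs1 : (List.ofFn (μ ∘ Tuple.sort μ)).Pairwise (· ≤ ·) :=
    (Tuple.monotone_sort μ).sortedLE_ofFn.pairwise
  have hs2 : (List.ofFn (ν ∘ Tuple.sort ν)).Pairwise (· ≤ ·) :=
    (Tuple.monotone_sort ν).sortedLE_ofFn.pairwise
  have heq : μ ∘ Tuple.sort μ = ν ∘ Tuple.sort ν :=
    List.ofFn_injective (hp.eq_of_pairwise' hs1 hs2)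
  refine ⟨(Tuple.sort ν).symm.trans (Tuple.sort μ), ?_⟩
  funext x
  have := congrFun heq ((Tuple.sort ν).symm x)
  simpa using this.symm

/-- Existence of an orthogonal conjugation between two real symmetric matrices with
the same characteristic polynomial. -/
private lemma exists_orth_conj (n : ℕ) (A B : Matrix (Fin n) (Fin n) ℝ)
    (hAsym : A.IsSymm) (hBsym : B.IsSymm) (hchar : A.charpoly = B.charpoly) :
    ∃ Q : Matrix (Fin n) (Fin n) ℝ, Qᵀ * Q = 1 ∧ Q * Qᵀ = 1 ∧ B = Q * A * Qᵀ := by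
  classical
  have hA : A.IsHermitian := by
    rwa [Matrix.IsHermitian, Matrix.conjTranspose_eq_transpose_of_trivial]
  have hB : B.IsHermitian := by
    rwa [Matrix.IsHermitian, Matrix.conjTranspose_eq_transpose_of_trivial]
  set U : Matrix (Fin n) (Fin n) ℝ := (hA.eigenvectorUnitary : Matrix (Fin n) (Fin n) ℝ) with hUdef
  set V : Matrix (Fin n) (Fin n) ℝ := (hB.eigenvectorUnitary : Matrix (Fin n) (Fin n) ℝ) with hVdef
  set μ := hA.eigenvalues with hμdef
  set ν := hB.eigenvalues with hνdef
  have horth : ∀ (M : Matrix (Fin n) (Fin n) ℝ), M ∈ Matrix.unitaryGroup (Fin n) ℝ →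
      M * Mᵀ = 1 ∧ Mᵀ * M = 1 := by
    intro M h
    have h1 := (Matrix.mem_unitaryGroup_iff).mp h
    have h2 := (Matrix.mem_unitaryGroup_iff').mp h
    rw [Matrix.star_eq_conjTranspose, Matrix.conjTranspose_eq_transpose_of_trivial] at h1 h2
    exact ⟨h1, h2⟩
  obtain ⟨hUo, hUo'⟩ := horth U hA.eigenvectorUnitary.2
  obtain ⟨hVo, hVo'⟩ := horth V hB.eigenvectorUnitary.2
  have hAspec : A = U * Matrix.diagonal μ * Uᵀ := by
    have := hA.spectral_theorem
    rw [Unitary.conjStarAlgAut_apply] at this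
    conv_lhs => rw [this]
    simp only [Matrix.star_eq_conjTranspose, Matrix.conjTranspose_eq_transpose_of_trivial]
    rfl
  have hBspec : B = V * Matrix.diagonal ν * Vᵀ := by
    have := hB.spectral_theorem
    rw [Unitary.conjStarAlgAut_apply] at this
    conv_lhs => rw [this]
    simp only [Matrix.star_eq_conjTranspose, Matrix.conjTranspose_eq_transpose_of_trivial]
    rfl
  have hc : (Matrix.diagonal μ).charpoly = (Matrix.diagonal ν).charpoly := by
    have h1 : A.charpoly = (Matrix.diagonal μ).charpoly := by
      rw [hAspec]; exact charpoly_orth_conj n U _ hUo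
    have h2 : B.charpoly = (Matrix.diagonal ν).charpoly := by
      rw [hBspec]; exact charpoly_orth_conj n V _ hVo
    rw [← h1, ← h2, hchar]
  rw [charpoly_diag, charpoly_diag] at hc
  obtain ⟨σ, hσ⟩ := exists_perm_comp n μ ν (multiset_eq_of_prod n μ ν hc)
  set P : Matrix (Fin n) (Fin n) ℝ := σ.toPEquiv.toMatrix with hPdef
  have hT : Pᵀ = σ.symm.toPEquiv.toMatrix := by
    rw [hPdef, ← PEquiv.toMatrix_symm, Equiv.toPEquiv_symm]
  have hPd : P * Matrix.diagonal μ * Pᵀ = Matrix.diagonal ν := by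
    rw [hT, hPdef, PEquiv.toMatrix_toPEquiv_mul, PEquiv.mul_toMatrix_toPEquiv,
      Matrix.submatrix_submatrix]
    ext i j
    simp [Matrix.submatrix_apply, Matrix.diagonal_apply, hσ, Function.comp,
      Equiv.symm_symm, σ.injective.eq_iff]
  have hPo : P * Pᵀ = 1 := by
    rw [hT, hPdef, ← PEquiv.toMatrix_trans, ← Equiv.toPEquiv_trans]
    simp
  have hPo' : Pᵀ * P = 1 := mul_eq_one_comm.mp hPo
  refine ⟨V * P * Uᵀ, ?_, ?_, ?_⟩
  · simp only [Matrix.transpose_mul, Matrix.transpose_transpose, Matrix.mul_assoc]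
    rw [aux_cancel hVo', aux_cancel hPo', hUo]
  · simp only [Matrix.transpose_mul, Matrix.transpose_transpose, Matrix.mul_assoc]
    rw [aux_cancel hUo', aux_cancel hPo, hVo]
  · rw [hAspec, hBspec]
    simp only [Matrix.transpose_mul, Matrix.transpose_transpose, Matrix.mul_assoc]
    rw [aux_cancel hUo', aux_cancel hUo', ← Matrix.mul_assoc P, ← Matrix.mul_assoc (P * Matrix.diagonal μ), hPd]

end AuxSpectral

/-- Two symmetric matrices with the same characteristic polynomial, both having 𝟏 as
an eigenvector for λ₀ with dim ker(A - λ₀ I) = 1, are orthogonally similar via an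
orthogonal matrix fixing 𝟏. -/
theorem exists_orthogonal_fixing_one_conj (n : ℕ) (hn : 1 ≤ n)
    (A B : Matrix (Fin n) (Fin n) ℝ) (l0 : ℝ)
    (hAsym : A.IsSymm) (hBsym : B.IsSymm)
    (hchar : A.charpoly = B.charpoly)
    (hA1 : A *ᵥ 1 = l0 • 1) (hB1 : B *ᵥ 1 = l0 • 1)
    (hmult : Module.finrank ℝ (LinearMap.ker (Matrix.toLin' (A - l0 • 1))) = 1) :
    ∃ Q : Matrix (Fin n) (Fin n) ℝ, Qᵀ * Q = 1 ∧ Q *ᵥ 1 = 1 ∧ B = Q * A * Qᵀ := by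
  classical
  obtain ⟨Q1, hQo', hQo, hQAB⟩ := exists_orth_conj n A B hAsym hBsym hchar
  -- A * Q1ᵀ = Q1ᵀ * B
  have hcomm : A * Q1ᵀ = Q1ᵀ * B := by
    rw [hQAB, ← Matrix.mul_assoc, ← Matrix.mul_assoc, hQo', Matrix.one_mul]
  set v : Fin n → ℝ := Q1ᵀ *ᵥ 1 with hvdef
  have hAv : A *ᵥ v = l0 • v := by
    rw [hvdef, Matrix.mulVec_mulVec, hcomm, ← Matrix.mulVec_mulVec, hB1,
      Matrix.mulVec_smul]
  have hker : ∀ x : Fin n → ℝ, A *ᵥ x = l0 • x →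
      x ∈ LinearMap.ker (Matrix.toLin' (A - l0 • 1)) := by
    intro x hx
    rw [LinearMap.mem_ker, Matrix.toLin'_apply, Matrix.sub_mulVec,
      Matrix.smul_mulVec, Matrix.one_mulVec, hx, sub_self]
  have h1mem := hker 1 hA1
  have hvmem := hker v hAv
  have h1ne : (1 : Fin n → ℝ) ≠ 0 := by
    intro h
    have := congrFun h ⟨0, hn⟩
    simpa using this
  have hne' : (⟨1, h1mem⟩ : LinearMap.ker (Matrix.toLin' (A - l0 • 1))) ≠ 0 := by
    intro h
    exact h1ne (congrArg Subtype.val h)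
  have hspan := (finrank_eq_one_iff_of_nonzero
    (⟨1, h1mem⟩ : LinearMap.ker (Matrix.toLin' (A - l0 • 1))) hne').mp hmult
  have hvin : (⟨v, hvmem⟩ : LinearMap.ker (Matrix.toLin' (A - l0 • 1))) ∈
      Submodule.span ℝ {(⟨1, h1mem⟩ : LinearMap.ker (Matrix.toLin' (A - l0 • 1)))} := by
    rw [hspan]; trivial
  obtain ⟨c, hc⟩ := Submodule.mem_span_singleton.mp hvin
  have hcv : c • (1 : Fin n → ℝ) = v := congrArg Subtype.val hc
  have hQv : Q1 *ᵥ v = 1 := by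
    rw [hvdef, Matrix.mulVec_mulVec, hQo, Matrix.one_mulVec]
  have hnR : (0 : ℝ) < (n : ℝ) := by exact_mod_cast hn
  have hdot1 : v ⬝ᵥ v = (n : ℝ) := by
    conv_lhs => rw [hvdef, Matrix.dotProduct_mulVec, Matrix.vecMul_transpose, ← hvdef, hQv]
    simp [dotProduct]
  have hdot2 : v ⬝ᵥ v = c * c * (n : ℝ) := by
    rw [← hcv]
    simp [smul_dotProduct, dotProduct_smul, dotProduct, mul_assoc,
      Finset.mul_sum]
    ring
  have hc2 : c * c = 1 := by
    have h := hdot1.symm.trans hdot2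
    have h2 : c * c * (n : ℝ) = 1 * (n : ℝ) := by rw [one_mul]; linarith
    exact mul_right_cancel₀ (ne_of_gt hnR) h2
  rcases mul_self_eq_one_iff.mp hc2 with hc1 | hc1
  · refine ⟨Q1, hQo', ?_, hQAB⟩
    have hv1 : v = 1 := by rw [← hcv, hc1, one_smul]
    rw [hv1] at hQv
    exact hQv
  · refine ⟨-Q1, ?_, ?_, ?_⟩
    · rw [Matrix.transpose_neg, neg_mul_neg, hQo']
    · have hv1 : v = -1 := by rw [← hcv, hc1]; funext i; simp
      rw [hv1] at hQv
      rw [Matrix.neg_mulVec]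
      rw [Matrix.mulVec_neg] at hQv
      exact hQv
    · rw [Matrix.transpose_neg, Matrix.neg_mul, neg_mul_neg]
      exact hQAB
end

section
/- Let n ≥ 1, N ∈ ℝ, and let A, B be real n×n matrices with all row and column sums of both equal to N, and suppose B = P A Pᵀ for some permutation matrix P. Let Δ be the dimension of the subspace P₀(A,A). Then for every t > 0, the Δ-dimensional Hausdorff measures (with respect to the Frobenius-norm metric on ℝ^{n×n}) of the three sets B(0,t) ∩ P(A,A), B(0,t) ∩ P(A,B), and B(0,t) ∩ P(B,B) are all equal, where B(0,t) denotes the closed Frobenius-norm ball of radius t centered at the zero matrix. -/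
open Matrix MeasureTheory ENNReal

section PermAux
variable {n : ℕ}

lemma permMatrix_exists_perm {P : Matrix (Fin n) (Fin n) ℝ} (hP : IsPermMatrix P) :
    ∃ σ : Equiv.Perm (Fin n), ∀ i j, P i j = if σ i = j then 1 else 0 := by
  obtain ⟨h01, hrow, hcol⟩ := hP
  choose f hf using hrow
  have hinj : Function.Injective f := by
    intro i i' h
    obtain ⟨k, hk1, hku⟩ := hcol (f i)
    have h1 := hku i (hf i).1
    have h2 := hku i' (by rw [h]; exact (hf i').1)
    rw [h1, h2]
  refine ⟨Equiv.ofBijective f (Finite.injective_iff_bijective.mp hinj), fun i j => ?_⟩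
  simp only [Equiv.ofBijective_apply]
  by_cases h : f i = j
  · subst h; simp [(hf i).1]
  · simp only [h, if_false]
    rcases h01 i j with h0 | h1
    · exact h0
    · exact absurd ((hf i).2 j h1).symm h

variable {P : Matrix (Fin n) (Fin n) ℝ} {σ : Equiv.Perm (Fin n)}
variable (hPσ : ∀ i j, P i j = if σ i = j then 1 else 0)
include hPσ

lemma perm_transpose_apply : ∀ i j, Pᵀ i j = if σ.symm i = j then 1 else 0 := by
  intro i j
  rw [Matrix.transpose_apply, hPσ]
  congr 1
  simp [eq_comm, Equiv.eq_symm_apply]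

lemma perm_mulVec_one : P *ᵥ (1 : Fin n → ℝ) = 1 := by
  funext i
  simp [Matrix.mulVec, dotProduct, hPσ]

lemma perm_mul_transpose : P * Pᵀ = 1 := by
  ext i j
  simp only [Matrix.mul_apply, Matrix.transpose_apply, hPσ, Matrix.one_apply]
  rcases eq_or_ne i j with rfl | h
  · simp
  · rw [if_neg h, Finset.sum_eq_zero]
    intro k _
    rcases eq_or_ne (σ i) k with rfl | hk
    · have hji : σ j ≠ σ i := fun hc => h (σ.injective hc).symm
      simp [hji]
    · simp [hk]

lemma transpose_mul_perm : Pᵀ * P = 1 := by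
  have := perm_mul_transpose (perm_transpose_apply hPσ)
  simpa using this

lemma mul_permT_apply (X : Matrix (Fin n) (Fin n) ℝ) (i j : Fin n) :
    (X * Pᵀ) i j = X i (σ j) := by
  simp only [Matrix.mul_apply, Matrix.transpose_apply, hPσ]
  rw [Finset.sum_eq_single (σ j)]
  · simp
  · intro k _ hk; rw [if_neg, mul_zero]; exact fun hc => hk (by rw [← hc])
  · simp

lemma perm_mul_apply (X : Matrix (Fin n) (Fin n) ℝ) (i j : Fin n) :
    (P * X) i j = X (σ i) j := by
  simp only [Matrix.mul_apply, hPσ]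
  rw [Finset.sum_eq_single (σ i)]
  · simp
  · intro k _ hk; rw [if_neg, zero_mul]; exact fun hc => hk (by rw [← hc])
  · simp

lemma mul_perm_apply (X : Matrix (Fin n) (Fin n) ℝ) (i j : Fin n) :
    (X * P) i j = X i (σ.symm j) := by
  have h := mul_permT_apply (perm_transpose_apply hPσ) X i j
  rwa [Matrix.transpose_transpose] at h

end PermAux

section FrobAux
variable {n : ℕ}

lemma frob_eq (X : Matrix (Fin n) (Fin n) ℝ) :
    frob X = Real.sqrt (∑ p : Fin n × Fin n, X p.1 p.2 ^ 2) := by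
  unfold frob
  congr 1
  rw [Matrix.trace, Fintype.sum_prod_type]
  simp [Matrix.diag, Matrix.mul_apply, sq]

lemma frob_comp_perm (e : Equiv.Perm (Fin n × Fin n))
    (X Y : Matrix (Fin n) (Fin n) ℝ) (h : ∀ p : Fin n × Fin n, X p.1 p.2 = Y (e p).1 (e p).2) :
    frob X = frob Y := by
  rw [frob_eq, frob_eq]
  congr 1
  exact Fintype.sum_equiv e _ _ (fun p => by rw [h p])

variable {P : Matrix (Fin n) (Fin n) ℝ} {σ : Equiv.Perm (Fin n)}
variable (hPσ : ∀ i j, P i j = if σ i = j then 1 else 0)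
include hPσ

lemma frob_mul_right (X : Matrix (Fin n) (Fin n) ℝ) : frob (X * P) = frob X := by
  refine frob_comp_perm (Equiv.prodCongr (Equiv.refl _) σ.symm) _ _ (fun p => ?_)
  simp [mul_perm_apply hPσ]

lemma frob_mul_left (X : Matrix (Fin n) (Fin n) ℝ) : frob (P * X) = frob X := by
  refine frob_comp_perm (Equiv.prodCongr σ (Equiv.refl _)) _ _ (fun p => ?_)
  simp [perm_mul_apply hPσ]

end FrobAux

section PsetAux
variable {n : ℕ} {Q : Matrix (Fin n) (Fin n) ℝ} {τ : Equiv.Perm (Fin n)}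
variable (hQ : ∀ i j, Q i j = if τ i = j then 1 else 0)
include hQ

lemma mem_Pset_mul_right {S T X : Matrix (Fin n) (Fin n) ℝ} (hX : X ∈ Pset S T) :
    X * Q ∈ Pset S (Qᵀ * T * Q) := by
  obtain ⟨⟨h1, h2, h3⟩, h4⟩ := hX
  refine ⟨⟨?_, ?_, ?_⟩, ?_⟩
  · rw [← Matrix.mulVec_mulVec, perm_mulVec_one hQ, h1]
  · rw [Matrix.transpose_mul, ← Matrix.mulVec_mulVec, h2, Matrix.mulVec_zero]
  · have e1 : X * Q * (Qᵀ * T * Q) = X * T * Q := by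
      simp only [← Matrix.mul_assoc]
      rw [Matrix.mul_assoc X Q Qᵀ, perm_mul_transpose hQ, Matrix.mul_one]
    have e2 : S * (X * Q) = S * X * Q := (Matrix.mul_assoc S X Q).symm
    rw [e1, e2, ← Matrix.sub_mul, h3, Matrix.zero_mul]
  · intro i j
    rw [mul_perm_apply hQ]
    exact h4 _ _

lemma mem_Pset_mul_left {S T X : Matrix (Fin n) (Fin n) ℝ} (hX : X ∈ Pset S T) :
    Q * X ∈ Pset (Q * S * Qᵀ) T := by
  obtain ⟨⟨h1, h2, h3⟩, h4⟩ := hX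
  refine ⟨⟨?_, ?_, ?_⟩, ?_⟩
  · rw [← Matrix.mulVec_mulVec, h1, Matrix.mulVec_zero]
  · rw [Matrix.transpose_mul, ← Matrix.mulVec_mulVec,
      perm_mulVec_one (perm_transpose_apply hQ), h2]
  · have e1 : Q * S * Qᵀ * (Q * X) = Q * (S * X) := by
      simp only [← Matrix.mul_assoc]
      rw [Matrix.mul_assoc (Q * S) Qᵀ Q, transpose_mul_perm hQ, Matrix.mul_one,
        Matrix.mul_assoc]
    have e2 : Q * X * T = Q * (X * T) := Matrix.mul_assoc Q X T
    rw [e1, e2, ← Matrix.mul_sub, h3, Matrix.mul_zero]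
  · intro i j
    rw [perm_mul_apply hQ]
    exact h4 _ _

end PsetAux

/-- transfer of Hausdorff measure along a coordinate permutation -/
lemma measure_image_eq_of_perm {n : ℕ} (d : ℝ) (hd : 0 ≤ d) (e : Equiv.Perm (Fin n × Fin n))
    (S T : Set (Matrix (Fin n) (Fin n) ℝ))
    (g : Matrix (Fin n) (Fin n) ℝ → Matrix (Fin n) (Fin n) ℝ)
    (hg : g '' S = T)
    (hcomm : ∀ X p, g X p.1 p.2 = X (e p).1 (e p).2) :
    μH[d] (matEuclid n '' T) = μH[d] (matEuclid n '' S) := by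
  set F := LinearIsometryEquiv.piLpCongrLeft 2 ℝ ℝ e.symm with hF
  have key : ∀ X, matEuclid n (g X) = F (matEuclid n X) := by
    intro X
    ext p
    rw [hF]
    simp only [LinearIsometryEquiv.piLpCongrLeft_apply, Equiv.piCongrLeft'_apply,
      Equiv.symm_symm]
    exact hcomm X p
  have himg : matEuclid n '' T = F '' (matEuclid n '' S) := by
    rw [← hg, Set.image_image, Set.image_image]
    exact Set.image_congr (fun X _ => key X)
  rw [himg]
  exact F.isometry.hausdorffMeasure_image (Or.inl hd) _

/-- If A, B have all row and column sums equal to N and B = P A Pᵀ for a permutation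
matrix P, then for every t > 0 the Δ-dimensional Hausdorff measures (Frobenius metric,
Δ = dim P₀(A,A)) of B(0,t) ∩ P(A,A), B(0,t) ∩ P(A,B) and B(0,t) ∩ P(B,B) coincide. -/
theorem hausdorff_measures_eq_of_permSimilar (n : ℕ) (hn : 1 ≤ n) (N : ℝ)
    (A B P : Matrix (Fin n) (Fin n) ℝ)
    (hA : A *ᵥ 1 = N • 1) (hAT : Aᵀ *ᵥ 1 = N • 1)
    (hB : B *ᵥ 1 = N • 1) (hBT : Bᵀ *ᵥ 1 = N • 1)
    (hP : IsPermMatrix P) (hBA : B = P * A * Pᵀ)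
    (Δ : ℕ) (hΔ : Δ = Module.finrank ℝ (P0sub A A))
    (t : ℝ) (ht : 0 < t) :
    μH[(Δ : ℝ)] (matEuclid n '' ({X | frob X ≤ t} ∩ Pset A A)) =
      μH[(Δ : ℝ)] (matEuclid n '' ({X | frob X ≤ t} ∩ Pset A B)) ∧
    μH[(Δ : ℝ)] (matEuclid n '' ({X | frob X ≤ t} ∩ Pset A B)) =
      μH[(Δ : ℝ)] (matEuclid n '' ({X | frob X ≤ t} ∩ Pset B B)) := by
  obtain ⟨σ, hPσ⟩ := permMatrix_exists_perm hP
  have hPQQ : P * Pᵀ = 1 := perm_mul_transpose hPσ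
  have hQQP : Pᵀ * P = 1 := transpose_mul_perm hPσ
  have hPTσ := perm_transpose_apply hPσ
  have hd : (0:ℝ) ≤ (Δ : ℝ) := Nat.cast_nonneg _
  constructor
  · -- Pset A B from Pset A A via X ↦ X * Pᵀ
    refine (measure_image_eq_of_perm (Δ:ℝ) hd (Equiv.prodCongr (Equiv.refl _) σ)
      ({X | frob X ≤ t} ∩ Pset A A) ({X | frob X ≤ t} ∩ Pset A B)
      (fun X => X * Pᵀ) ?_ ?_).symm
    · ext Y
      constructor
      · rintro ⟨X, ⟨hft, hmem⟩, rfl⟩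
        refine ⟨?_, ?_⟩
        · show frob (X * Pᵀ) ≤ t
          rwa [frob_mul_right hPTσ]
        · have h := mem_Pset_mul_right hPTσ hmem
          rwa [Matrix.transpose_transpose, ← hBA] at h
      · rintro ⟨hft, hmem⟩
        refine ⟨Y * P, ⟨?_, ?_⟩, ?_⟩
        · show frob (Y * P) ≤ t
          rwa [frob_mul_right hPσ]
        · have h := mem_Pset_mul_right hPσ hmem
          have hA : Pᵀ * B * P = A := by
            rw [hBA]
            simp only [← Matrix.mul_assoc]
            rw [hQQP, Matrix.one_mul, Matrix.mul_assoc A Pᵀ P, hQQP, Matrix.mul_one]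
          rwa [hA] at h
        · show Y * P * Pᵀ = Y
          rw [Matrix.mul_assoc, hPQQ, Matrix.mul_one]
    · intro X p
      exact mul_permT_apply hPσ X p.1 p.2
  · -- Pset B B from Pset A B via X ↦ P * X
    refine (measure_image_eq_of_perm (Δ:ℝ) hd (Equiv.prodCongr σ (Equiv.refl _))
      ({X | frob X ≤ t} ∩ Pset A B) ({X | frob X ≤ t} ∩ Pset B B)
      (fun X => P * X) ?_ ?_).symm
    · ext Y
      constructor
      · rintro ⟨X, ⟨hft, hmem⟩, rfl⟩
        refine ⟨?_, ?_⟩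
        · show frob (P * X) ≤ t
          rwa [frob_mul_left hPσ]
        · have h := mem_Pset_mul_left hPσ hmem
          rwa [← hBA] at h
      · rintro ⟨hft, hmem⟩
        refine ⟨Pᵀ * Y, ⟨?_, ?_⟩, ?_⟩
        · show frob (Pᵀ * Y) ≤ t
          rwa [frob_mul_left hPTσ]
        · have h := mem_Pset_mul_left hPTσ hmem
          have hA : Pᵀ * B * Pᵀᵀ = A := by
            rw [Matrix.transpose_transpose, hBA]
            simp only [← Matrix.mul_assoc]
            rw [hQQP, Matrix.one_mul, Matrix.mul_assoc A Pᵀ P, hQQP, Matrix.mul_one]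
          rwa [hA] at h
        · show P * (Pᵀ * Y) = Y
          rw [← Matrix.mul_assoc, hPQQ, Matrix.one_mul]
    · intro X p
      exact perm_mul_apply hPσ X p.1 p.2
end

section
/- Let n ≥ 2, N ∈ ℝ, and let A be a real n×n matrix with all row and column sums equal to N. Let Δ be the dimension of the subspace P₀(A,A), and let μ denote the Δ-dimensional Hausdorff measure on ℝ^{n×n} with respect to the Frobenius-norm metric. Then the function t ↦ μ(B(0,t) ∩ P(A,A)) is strictly increasing on the interval (0, √(n−1)], where B(0,t) is the closed Frobenius-norm ball of radius t centered at the zero matrix. -/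
open Matrix MeasureTheory ENNReal

/-! ### Auxiliary lemmas -/

lemma euclid_haus_lt_top {m : ℕ} {S : Set (EuclideanSpace ℝ (Fin m))}
    (hS : Bornology.IsBounded S) : μH[(m : ℝ)] S < ⊤ := by
  set f := WithLp.equiv 2 (Fin m → ℝ) with hf
  have hanti := PiLp.antilipschitzWith_ofLp 2 (fun _ : Fin m => ℝ)
  have h1 := hanti.le_hausdorffMeasure_image (d := (m : ℝ)) (Nat.cast_nonneg m) S
  have hpi : (μH[(m : ℝ)] : Measure (Fin m → ℝ)) = volume := by
    simpa using hausdorffMeasure_pi_real (ι := Fin m)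
  have hb : Bornology.IsBounded (f '' S) :=
    ((PiLp.lipschitzWith_ofLp 2 (fun _ : Fin m => ℝ)).isBounded_image hS)
  obtain ⟨R, hR⟩ := hb.subset_closedBall 0
  have hvol : volume (f '' S) < ⊤ :=
    lt_of_le_of_lt (measure_mono hR) (isCompact_closedBall 0 R).measure_lt_top
  calc μH[(m : ℝ)] S ≤ _ * μH[(m : ℝ)] (f '' S) := h1
    _ < ⊤ := by
        rw [hpi] at *
        exact ENNReal.mul_lt_top
          (ENNReal.rpow_lt_top_of_nonneg (Nat.cast_nonneg m) ENNReal.coe_ne_top) hvol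

lemma euclid_haus_ball_pos {m : ℕ} (hm : 0 < m) (x : EuclideanSpace ℝ (Fin m)) {ε : ℝ}
    (hε : 0 < ε) : 0 < μH[(m : ℝ)] (Metric.closedBall x ε) := by
  set f := WithLp.equiv 2 (Fin m → ℝ) with hf
  have hlip := PiLp.lipschitzWith_ofLp 2 (fun _ : Fin m => ℝ)
  have hanti := PiLp.antilipschitzWith_ofLp 2 (fun _ : Fin m => ℝ)
  set K : NNReal := (Fintype.card (Fin m) : NNReal) ^ (1 / (2:ℝ≥0∞)).toReal with hK
  have hKpos : 0 < (K : ℝ) := by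
    have h0 : 0 < K := NNReal.rpow_pos (by simpa using hm)
    exact_mod_cast h0
  have hsub : Metric.closedBall (f x) (ε / K) ⊆ f '' Metric.closedBall x ε := by
    intro y hy
    refine ⟨(WithLp.equiv 2 (Fin m → ℝ)).symm y, ?_, by simp [hf]⟩
    rw [Metric.mem_closedBall] at hy ⊢
    have := hanti.le_mul_dist ((WithLp.equiv 2 (Fin m → ℝ)).symm y) x
    change _ ≤ K * dist y (f x) at this
    calc dist ((WithLp.equiv 2 (Fin m → ℝ)).symm y) x ≤ K * dist y (f x) := this
      _ ≤ K * (ε / K) := by gcongr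
      _ = ε := by field_simp
  have hpi : (μH[(m : ℝ)] : Measure (Fin m → ℝ)) = volume := by
    simpa using hausdorffMeasure_pi_real (ι := Fin m)
  have h2 := hlip.hausdorffMeasure_image_le (d := (m : ℝ)) (Nat.cast_nonneg m)
    (Metric.closedBall x ε)
  rw [hpi] at h2
  have hvpos : 0 < volume (Metric.closedBall (f x) (ε / K)) :=
    Metric.measure_closedBall_pos volume _ (by positivity)
  have h4 : 0 < volume (f '' Metric.closedBall x ε) :=
    lt_of_lt_of_le hvpos (measure_mono hsub)
  have h3 : volume (f '' Metric.closedBall x ε) ≤ μH[(m : ℝ)] (Metric.closedBall x ε) := by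
    change volume (WithLp.ofLp '' Metric.closedBall x ε) ≤ _
    simpa using h2
  exact lt_of_lt_of_le h4 h3

lemma matEuclid_apply {n : ℕ} (X : Matrix (Fin n) (Fin n) ℝ) (p : Fin n × Fin n) :
    matEuclid n X p = X p.1 p.2 := rfl

noncomputable def matL (n : ℕ) :
    Matrix (Fin n) (Fin n) ℝ ≃ₗ[ℝ] EuclideanSpace ℝ (Fin n × Fin n) where
  toFun := matEuclid n
  invFun := fun y => Matrix.of fun i j => y (i, j)
  map_add' := fun _ _ => rfl
  map_smul' := fun _ _ => rfl
  left_inv := fun _ => rfl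
  right_inv := fun _ => rfl

lemma frob_eq_norm {n : ℕ} (X : Matrix (Fin n) (Fin n) ℝ) : frob X = ‖matEuclid n X‖ := by
  rw [EuclideanSpace.norm_eq, frob]
  congr 1
  simp [Matrix.trace, Matrix.mul_apply, Matrix.diag, Fintype.sum_prod_type, matEuclid_apply,
    sq_abs, sq]

lemma coord_abs_le_norm {ι : Type*} [Fintype ι] (y : EuclideanSpace ℝ ι) (p : ι) :
    |y p| ≤ ‖y‖ := by
  rw [EuclideanSpace.norm_eq]
  have h1 : |y p| = Real.sqrt (‖y p‖ ^ 2) := by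
    rw [Real.sqrt_sq_eq_abs]; simp
  rw [h1]
  apply Real.sqrt_le_sqrt
  exact Finset.single_le_sum (f := fun i => ‖y i‖ ^ 2) (fun i _ => by positivity)
    (Finset.mem_univ p)

lemma vmem {n : ℕ} (N : ℝ) (A : Matrix (Fin n) (Fin n) ℝ) (hn : 2 ≤ n)
    (hA : A *ᵥ 1 = N • 1) (hAT : Aᵀ *ᵥ 1 = N • 1) :
    (1 - Jmat n) ∈ P0 A A := by
  have hn0 : (n : ℝ) ≠ 0 := by positivity
  have hJ1 : Jmat n *ᵥ 1 = 1 := by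
    ext i
    simp only [Jmat, Matrix.mulVec, dotProduct, Matrix.of_apply, Pi.one_apply, mul_one,
      Finset.sum_const, Finset.card_univ, Fintype.card_fin, nsmul_eq_mul]
    field_simp
  have hAJ : A * Jmat n = Jmat n * A := by
    ext i j
    have h1 : (A *ᵥ 1) i = N := by rw [hA]; simp
    have h2 : (Aᵀ *ᵥ 1) j = N := by rw [hAT]; simp
    simp only [Matrix.mul_apply, Jmat, Matrix.of_apply]
    rw [show (∑ k, A i k * (1/(n:ℝ))) = (∑ k, A i k) * (1/(n:ℝ)) by rw [Finset.sum_mul],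
      show (∑ k, (1/(n:ℝ)) * A k j) = (1/(n:ℝ)) * ∑ k, A k j by rw [Finset.mul_sum]]
    have e1 : ∑ k, A i k = N := by simpa [Matrix.mulVec, dotProduct] using h1
    have e2 : ∑ k, A k j = N := by
      simpa [Matrix.mulVec, dotProduct, Matrix.transpose_apply] using h2
    rw [e1, e2]
    ring
  refine ⟨?_, ?_, ?_⟩
  · rw [Matrix.sub_mulVec, Matrix.one_mulVec, hJ1, sub_self]
  · rw [Matrix.transpose_sub, Matrix.transpose_one, Matrix.sub_mulVec, Matrix.one_mulVec]
    have : (Jmat n)ᵀ = Jmat n := by ext i j; simp [Jmat]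
    rw [this, hJ1, sub_self]
  · rw [Matrix.mul_sub, Matrix.sub_mul, Matrix.mul_one, Matrix.one_mul, hAJ]
    abel

lemma sumsq {n : ℕ} (hn : 2 ≤ n) :
    ∑ i : Fin n, ∑ j : Fin n, ((1 - Jmat n) i j) ^ 2 = (n : ℝ) - 1 := by
  have hn0 : (n : ℝ) ≠ 0 := by positivity
  have hentry : ∀ i j : Fin n, (1 - Jmat n) i j = (if i = j then (1:ℝ) else 0) - 1 / n := by
    intro i j
    simp [Jmat, Matrix.sub_apply, Matrix.one_apply]
  have hrow : ∀ i : Fin n, ∑ j : Fin n, ((1 - Jmat n) i j) ^ 2 = 1 - 1 / n := by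
    intro i
    have h : ∀ j, ((1 - Jmat n) i j) ^ 2
        = (if i = j then (1:ℝ) else 0) - 2 * (if i = j then (1:ℝ) else 0) / n + 1 / n ^ 2 := by
      intro j
      rw [hentry]
      split_ifs <;> ring
    rw [Finset.sum_congr rfl fun j _ => h j]
    rw [Finset.sum_add_distrib, Finset.sum_sub_distrib]
    have e1 : ∑ j : Fin n, (if i = j then (1:ℝ) else 0) = 1 := by simp
    have e2 : ∑ j : Fin n, (2 * if i = j then (1:ℝ) else 0) / (n:ℝ)
        = (∑ j : Fin n, 2 * if i = j then (1:ℝ) else 0) / (n:ℝ) := by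
      rw [Finset.sum_div]
    have e3 : ∑ j : Fin n, 2 * (if i = j then (1:ℝ) else 0) = 2 := by simp
    rw [e1, e2, e3]
    simp only [Finset.sum_const, Finset.card_univ, Fintype.card_fin, nsmul_eq_mul]
    field_simp
    ring
  rw [Finset.sum_congr rfl fun i _ => hrow i]
  simp only [Finset.sum_const, Finset.card_univ, Fintype.card_fin, nsmul_eq_mul]
  field_simp

lemma frob_eq_sqrt_sum {n : ℕ} (X : Matrix (Fin n) (Fin n) ℝ) :
    frob X = Real.sqrt (∑ i, ∑ j, X i j ^ 2) := by
  rw [frob]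
  congr 1
  simp [Matrix.trace, Matrix.mul_apply, Matrix.diag, sq]

/-- For A with all row and column sums equal to N and Δ = dim P₀(A,A), the
Δ-dimensional Hausdorff measure (Frobenius metric) of B(0,t) ∩ P(A,A) is a strictly
increasing function of t on (0, √(n-1)]. -/
theorem hausdorff_measure_strictMonoOn (n : ℕ) (hn : 2 ≤ n) (N : ℝ)
    (A : Matrix (Fin n) (Fin n) ℝ)
    (hA : A *ᵥ 1 = N • 1) (hAT : Aᵀ *ᵥ 1 = N • 1)
    (Δ : ℕ) (hΔ : Δ = Module.finrank ℝ (P0sub A A)) :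
    StrictMonoOn
      (fun t : ℝ => μH[(Δ : ℝ)] (matEuclid n '' ({X | frob X ≤ t} ∩ Pset A A)))
      (Set.Ioc 0 (Real.sqrt ((n : ℝ) - 1))) := by
  intro s hs t ht hst
  obtain ⟨hs0, hsle⟩ := hs
  obtain ⟨ht0, htle⟩ := ht
  have hn0 : (0:ℝ) < n := by positivity
  set W : Submodule ℝ (EuclideanSpace ℝ (Fin n × Fin n)) :=
    (P0sub A A).map (matL n).toLinearMap with hW
  have hΔm : Δ = Module.finrank ℝ ↥W := by
    rw [hΔ, hW, LinearEquiv.finrank_map_eq]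
  set m := Module.finrank ℝ ↥W with hm
  -- the sets in Euclidean space
  set Es : ℝ → Set (EuclideanSpace ℝ (Fin n × Fin n)) := fun r =>
    {y | ‖y‖ ≤ r ∧ y ∈ W ∧ ∀ p : Fin n × Fin n, -(1/(n:ℝ)) ≤ y p} with hEs
  have himg : ∀ r : ℝ, matEuclid n '' ({X | frob X ≤ r} ∩ Pset A A) = Es r := by
    intro r
    ext y
    constructor
    · rintro ⟨X, ⟨hfr, hX0, hXent⟩, rfl⟩
      refine ⟨by rw [← frob_eq_norm]; exact hfr, ?_, fun p => hXent p.1 p.2⟩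
      exact Submodule.mem_map.mpr ⟨X, hX0, rfl⟩
    · rintro ⟨h1, h2, h3⟩
      rcases Submodule.mem_map.mp h2 with ⟨X, hX, rfl⟩
      exact ⟨X, ⟨show frob X ≤ r by rw [frob_eq_norm]; exact h1, hX,
        fun i j => h3 (i, j)⟩, rfl⟩
  -- the special point q
  set r := Real.sqrt ((n:ℝ) - 1) with hr
  have hr0 : 0 < r := Real.sqrt_pos.mpr (by
    have : (2:ℝ) ≤ n := by exact_mod_cast hn
    linarith)
  set t₀ := (s + t)/2 with ht₀
  set c := t₀ / r with hc
  have hc0 : 0 < c := by positivity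
  have hc1 : c < 1 := by
    rw [hc, div_lt_one hr0]
    calc t₀ < t := by rw [ht₀]; linarith
      _ ≤ r := htle
  set q' := c • ((1 : Matrix (Fin n) (Fin n) ℝ) - Jmat n) with hq'
  have hq'P0 : q' ∈ P0sub A A :=
    Submodule.smul_mem _ _ (vmem N A hn hA hAT)
  set q := matEuclid n q' with hq
  have hqW : q ∈ W := Submodule.mem_map.mpr ⟨q', hq'P0, rfl⟩
  have hfrobv : frob ((1 : Matrix (Fin n) (Fin n) ℝ) - Jmat n) = r := by
    rw [frob_eq_sqrt_sum, sumsq hn, hr]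
  have hqnorm : ‖q‖ = t₀ := by
    have hsm : matEuclid n q' = c • matEuclid n ((1 : Matrix (Fin n) (Fin n) ℝ) - Jmat n) := rfl
    rw [hq, hsm, norm_smul, ← frob_eq_norm, hfrobv]
    rw [Real.norm_eq_abs, abs_of_pos hc0, hc]
    field_simp
  -- the small ball
  set ε := min ((1 - c)/(n:ℝ)) ((t - s)/4) with hε
  have hε0 : 0 < ε := by
    apply lt_min
    · apply div_pos (by linarith) hn0
    · linarith
  have hε1 : ε ≤ (1 - c)/(n:ℝ) := min_le_left _ _
  have hε2 : ε ≤ (t - s)/4 := min_le_right _ _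
  set D : Set (EuclideanSpace ℝ (Fin n × Fin n)) := ↑W ∩ Metric.closedBall q ε with hD
  have hDsub : D ⊆ Es t := by
    rintro y ⟨hyW, hyB⟩
    rw [Metric.mem_closedBall] at hyB
    have hdist : ‖y - q‖ ≤ ε := by rwa [← dist_eq_norm]
    refine ⟨?_, hyW, ?_⟩
    · have : ‖y‖ ≤ ‖q‖ + ‖y - q‖ := by
        have h := norm_add_le q (y - q)
        rwa [show q + (y - q) = y from by abel] at h
      rw [hqnorm] at this
      rw [ht₀] at this
      linarith [le_trans hdist hε2]
    · intro p
      have hcoord : |y p - q p| ≤ ε := by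
        have h1 : |(y - q) p| ≤ ‖y - q‖ := coord_abs_le_norm (y - q) p
        have h2 : (y - q) p = y p - q p := rfl
        rw [h2] at h1
        exact h1.trans hdist
      have hqp : -(c/(n:ℝ)) ≤ q p := by
        have : q p = c * ((if p.1 = p.2 then (1:ℝ) else 0) - 1/(n:ℝ)) := by
          rw [hq, matEuclid_apply, hq']
          simp only [Matrix.smul_apply, Matrix.sub_apply, Matrix.one_apply, Jmat,
            Matrix.of_apply, smul_eq_mul]
        rw [this]
        split_ifs with h
        · have h1n : 1/(n:ℝ) ≤ 1 := by
            rw [div_le_one hn0]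
            exact_mod_cast Nat.one_le_of_lt hn
          have h2 : 0 ≤ c * (1 - 1/(n:ℝ)) := mul_nonneg hc0.le (by linarith)
          have h3 : 0 ≤ c/(n:ℝ) := by positivity
          linarith
        · rw [zero_sub, mul_neg, mul_one_div]
      have hyp : q p - ε ≤ y p := by
        have h := (abs_le.mp hcoord).1
        linarith
      have hkey : -(c/(n:ℝ)) - (1-c)/(n:ℝ) = -(1/(n:ℝ)) := by
        field_simp
        ring
      linarith [hqp, hyp, hε1, hkey]
  have hdisj : Disjoint (Es s) D := by
    rw [Set.disjoint_left]
    rintro y ⟨hy1, _, _⟩ ⟨hyW, hyB⟩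
    rw [Metric.mem_closedBall] at hyB
    have : ‖q‖ ≤ ‖y‖ + ‖q - y‖ := by
      have h := norm_add_le y (q - y)
      rwa [show y + (q - y) = q from by abel] at h
    rw [hqnorm, ht₀] at this
    have h2 : ‖q - y‖ ≤ ε := by rw [← dist_eq_norm, dist_comm]; exact hyB
    linarith [le_trans h2 hε2]
  -- transfer via isometry
  have hmpos : 0 < m := by
    have hq0 : q ≠ 0 := by
      intro h
      rw [h, norm_zero] at hqnorm
      rw [ht₀] at hqnorm
      linarith
    have : Nontrivial ↥W := nontrivial_of_ne ⟨q, hqW⟩ 0 (by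
      intro h
      exact hq0 (congrArg Subtype.val h))
    exact Module.finrank_pos
  set b := stdOrthonormalBasis ℝ ↥W with hb
  set e : EuclideanSpace ℝ (Fin m) →ₗᵢ[ℝ] EuclideanSpace ℝ (Fin n × Fin n) :=
    W.subtypeₗᵢ.comp b.repr.symm.toLinearIsometry with he
  have hrangee : ∀ x, e x ∈ W := fun x => (b.repr.symm x).2
  have hrange : Set.range e = ↑W := by
    apply Set.Subset.antisymm
    · rintro _ ⟨x, rfl⟩; exact hrangee x
    · rintro y hy
      exact ⟨b.repr ⟨y, hy⟩, by simp [he]⟩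
  have heq : ∀ S : Set (EuclideanSpace ℝ (Fin n × Fin n)), S ⊆ ↑W →
      μH[(m:ℝ)] S = μH[(m:ℝ)] (e ⁻¹' S) := by
    intro S hS
    have himg2 : e '' (e ⁻¹' S) = S :=
      Set.image_preimage_eq_of_subset (by rw [hrange]; exact hS)
    have h := e.isometry.hausdorffMeasure_image (d := (m:ℝ))
      (Or.inl (Nat.cast_nonneg m)) (e ⁻¹' S)
    rw [himg2] at h
    exact h
  -- finiteness
  have hEsW : Es s ⊆ ↑W := fun y hy => hy.2.1
  have hfin : μH[(m:ℝ)] (Es s) < ⊤ := by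
    rw [heq _ hEsW]
    apply euclid_haus_lt_top
    have : e ⁻¹' Es s ⊆ Metric.closedBall 0 s := by
      intro x hx
      rw [Metric.mem_closedBall, dist_zero_right, ← e.norm_map]
      exact hx.1
    exact (Metric.isBounded_closedBall).subset this
  -- positivity
  have hpos : 0 < μH[(m:ℝ)] D := by
    have hDW : D ⊆ ↑W := Set.inter_subset_left
    rw [heq _ hDW]
    have hpre : e ⁻¹' D = Metric.closedBall (b.repr ⟨q, hqW⟩) ε := by
      ext x
      simp only [hD, Set.mem_preimage, Set.mem_inter_iff, Metric.mem_closedBall]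
      constructor
      · rintro ⟨_, h2⟩
        have : e (b.repr ⟨q, hqW⟩) = q := by simp [he]
        rw [← this] at h2
        rwa [e.isometry.dist_eq] at h2
      · intro hx
        refine ⟨hrangee x, ?_⟩
        have : e (b.repr ⟨q, hqW⟩) = q := by simp [he]
        rw [← this, e.isometry.dist_eq]
        exact hx
    rw [hpre]
    exact euclid_haus_ball_pos hmpos _ hε0
  -- measurability of D
  have hDmeas : MeasurableSet D := by
    apply MeasurableSet.inter
    · exact (Submodule.closed_of_finiteDimensional W).measurableSet
    · exact Metric.isClosed_closedBall.measurableSet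
  -- conclusion
  simp only []
  rw [himg s, himg t, hΔm]
  have hmono : Es s ⊆ Es t := fun y hy => ⟨hy.1.trans hst.le, hy.2⟩
  calc μH[(m:ℝ)] (Es s) < μH[(m:ℝ)] (Es s) + μH[(m:ℝ)] D :=
        ENNReal.lt_add_right hfin.ne hpos.ne'
    _ = μH[(m:ℝ)] (Es s ∪ D) := (measure_union hdisj hDmeas).symm
    _ ≤ μH[(m:ℝ)] (Es t) := measure_mono (Set.union_subset hmono hDsub)
end
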